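/- arXiv:1810.12124 — 14 statements merged into one kernel-verified Lean document; each statement's English description precedes it below -/
import Mathlib

section
/- For a bornology 𝓑 on a set X, the following are equivalent: (1) 𝓑 is tall, i.e., every infinite subset of X has an infinite subset belonging to 𝓑; (2) every bornologous function f : X → ℝ (i.e., every f such that f(B) is a bounded subset of ℝ for each B ∈ 𝓑) is bounded on X. -/
/-- A bornology `𝓑` on a set `X` (covering, downward closed, closed under finite
unions) is tall (every infinite subset of `X` has an infinite bounded subset)
iff every bornologous function `f : X → ℝ` is bounded. -/
theorem tall_iff_every_bornologous_bounded {X : Type*} (𝓑 : Set (Set X))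
    (hcover : ∀ x : X, ∃ B ∈ 𝓑, x ∈ B)
    (hdown : ∀ A B : Set X, A ⊆ B → B ∈ 𝓑 → A ∈ 𝓑)
    (hunion : ∀ A ∈ 𝓑, ∀ B ∈ 𝓑, A ∪ B ∈ 𝓑) :
    (∀ A : Set X, A.Infinite → ∃ C ⊆ A, C.Infinite ∧ C ∈ 𝓑) ↔
      (∀ f : X → ℝ, (∀ B ∈ 𝓑, ∃ C : ℝ, ∀ x ∈ B, |f x| ≤ C) →
        ∃ C : ℝ, ∀ x : X, |f x| ≤ C) := by
  constructor
  · intro tall f hf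
    by_contra h
    push_neg at h
    choose x hx using h
    set A : Set X := Set.range (fun n : ℕ => x n) with hA
    have hAinf : A.Infinite := by
      intro hfin
      obtain ⟨M, hM⟩ := (hfin.image (fun a => |f a|)).bddAbove
      obtain ⟨n, hn⟩ := exists_nat_gt M
      have h1 : |f (x (n : ℝ))| ≤ M :=
        hM (Set.mem_image_of_mem _ ⟨n, rfl⟩)
      have h2 := hx (n : ℝ)
      linarith
    obtain ⟨C, hCA, hCinf, hCB⟩ := tall A hAinf
    obtain ⟨C', hC'⟩ := hf C hCB
    have hsub : C ⊆ (fun n : ℕ => x n) '' (Set.Iio ⌈C'⌉₊) := by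
      intro c hc
      obtain ⟨n, rfl⟩ := hCA hc
      exact ⟨n, Nat.lt_ceil.2 (lt_of_lt_of_le (hx _) (hC' _ hc)), rfl⟩
    exact hCinf ((Set.Finite.image _ (Set.finite_Iio _)).subset hsub)
  · intro hb A hAinf
    classical
    by_contra h
    push_neg at h
    let e := hAinf.natEmbedding
    let a : ℕ → X := fun n => (e n : X)
    have ha : Function.Injective a := fun m n hmn =>
      e.injective (Subtype.ext hmn)
    have haA : ∀ n, a n ∈ A := fun n => (e n).2
    let f : X → ℝ := fun y => if hy : ∃ n, a n = y then (hy.choose : ℝ) else 0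
    have hfa : ∀ n, f (a n) = n := by
      intro n
      have hy : ∃ m, a m = a n := ⟨n, rfl⟩
      have : hy.choose = n := ha hy.choose_spec
      simp only [f, dif_pos hy, this]
    have hborn : ∀ B ∈ 𝓑, ∃ C : ℝ, ∀ x ∈ B, |f x| ≤ C := by
      intro B hB
      have hSfin : {n : ℕ | a n ∈ B}.Finite := by
        by_contra hSinf
        have hSinf' : {n : ℕ | a n ∈ B}.Infinite := hSinf
        have hCinf : (a '' {n : ℕ | a n ∈ B}).Infinite :=
          hSinf'.image (ha.injOn)
        have hCsubA : a '' {n : ℕ | a n ∈ B} ⊆ A := by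
          rintro _ ⟨n, _, rfl⟩; exact haA n
        have hCsubB : a '' {n : ℕ | a n ∈ B} ⊆ B := by
          rintro _ ⟨n, hn, rfl⟩; exact hn
        exact h _ hCsubA hCinf (hdown _ B hCsubB hB)
      refine ⟨(hSfin.toFinset.sup id : ℕ), ?_⟩
      intro y hy
      by_cases hyr : ∃ n, a n = y
      · obtain ⟨n, rfl⟩ := hyr
        rw [hfa n, abs_of_nonneg (Nat.cast_nonneg n)]
        exact_mod_cast Finset.le_sup (f := id) (hSfin.mem_toFinset.2 hy)
      · simp only [f, dif_neg hyr, abs_zero]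
        exact Nat.cast_nonneg _
    obtain ⟨C, hC⟩ := hb f hborn
    obtain ⟨n, hn⟩ := exists_nat_gt C
    have := hC (a n)
    rw [hfa n, abs_of_nonneg (Nat.cast_nonneg n)] at this
    linarith
end

section
/- Let μ ≤ κ be infinite cardinals and X a set of cardinality κ. Suppose f : X → ℝ has the property that for every set F of bijections of X onto itself with |F| < μ there exists B ⊆ X with |B| < μ such that sup_{x ∈ X∖B} diam f({x} ∪ {h(x) : h ∈ F}) < ∞. Then there exists B ⊆ X with |B| < μ such that f is bounded on X∖B. -/
universe u

/-- The ball `E_F[x] = {x} ∪ {h(x) : h ∈ F}` for a family `F` of permutations of `X`. -/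
def permBall {X : Type u} (F : Set (Equiv.Perm X)) (x : X) : Set X :=
  insert x ((fun h : Equiv.Perm X => h x) '' F)

namespace EmuAux

open Cardinal Set

/-- Data for the construction: `μ` an infinite cardinal, `f` unbounded outside
every `< μ`-sized set, and a level function `n` on the canonical well-ordered
index type. -/
structure Setup (X : Type u) where
  μ : Cardinal.{u}
  f : X → ℝ
  hμ : Cardinal.aleph0 ≤ μ
  H : ∀ B : Set X, Cardinal.mk B < μ → ∀ C : ℝ, ∃ x, x ∉ B ∧ C < |f x|
  n : (Cardinal.ord μ).ToType → ℕ

namespace Setup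

variable {X : Type u} (S : Setup X)

/-- The index type: the canonical well-order of order type `μ.ord`. -/
abbrev Idx : Type u := (Cardinal.ord S.μ).ToType

/-- Points used by previous stages. -/
def usedSet (i : S.Idx) (rec : ∀ j, j < i → X × X) : Set X :=
  Set.range (fun j : Set.Iio i => (rec j.1 j.2).1) ∪
    Set.range (fun j : Set.Iio i => (rec j.1 j.2).2)

theorem usedSet_small (i : S.Idx) (rec : ∀ j, j < i → X × X) :
    Cardinal.mk (S.usedSet i rec) < S.μ := by
  refine lt_of_le_of_lt (mk_union_le _ _) (Cardinal.add_lt_of_lt S.hμ ?_ ?_) <;>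
    exact mk_range_le.trans_lt (Cardinal.mk_Iio_ord_toType i)

theorem insert_small (s : Set X) (hs : Cardinal.mk s < S.μ) (x : X) :
    Cardinal.mk (insert x s : Set X) < S.μ :=
  lt_of_le_of_lt mk_insert_le
    (Cardinal.add_lt_of_lt S.hμ hs (one_lt_aleph0.trans_le S.hμ))

/-- First member of the pair chosen at stage `i`. -/
noncomputable def fstStep (i : S.Idx) (rec : ∀ j, j < i → X × X) : X :=
  (S.H (S.usedSet i rec) (S.usedSet_small i rec) 0).choose

theorem fstStep_spec (i : S.Idx) (rec : ∀ j, j < i → X × X) :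
    S.fstStep i rec ∉ S.usedSet i rec :=
  (S.H (S.usedSet i rec) (S.usedSet_small i rec) 0).choose_spec.1

/-- Second member of the pair chosen at stage `i`. -/
noncomputable def sndStep (i : S.Idx) (rec : ∀ j, j < i → X × X) : X :=
  (S.H (insert (S.fstStep i rec) (S.usedSet i rec))
    (S.insert_small _ (S.usedSet_small i rec) _)
    (|S.f (S.fstStep i rec)| + (S.n i : ℝ))).choose

theorem sndStep_spec (i : S.Idx) (rec : ∀ j, j < i → X × X) :
    S.sndStep i rec ∉ insert (S.fstStep i rec) (S.usedSet i rec) ∧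
      |S.f (S.fstStep i rec)| + (S.n i : ℝ) < |S.f (S.sndStep i rec)| :=
  (S.H (insert (S.fstStep i rec) (S.usedSet i rec))
    (S.insert_small _ (S.usedSet_small i rec) _)
    (|S.f (S.fstStep i rec)| + (S.n i : ℝ))).choose_spec

noncomputable def step (i : S.Idx) (rec : ∀ j, j < i → X × X) : X × X :=
  (S.fstStep i rec, S.sndStep i rec)

/-- The transfinite sequence of pairs. -/
noncomputable def g : S.Idx → X × X :=
  WellFounded.fix (wellFounded_lt) S.step

theorem g_eq (i : S.Idx) : S.g i = S.step i (fun j _ => S.g j) :=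
  WellFounded.fix_eq _ _ i

/-- Points used before stage `i` in the final sequence. -/
def Used (i : S.Idx) : Set X := S.usedSet i (fun j _ => S.g j)

theorem g_fst (i : S.Idx) : (S.g i).1 = S.fstStep i (fun j _ => S.g j) := by
  rw [S.g_eq i]; rfl

theorem g_snd (i : S.Idx) : (S.g i).2 = S.sndStep i (fun j _ => S.g j) := by
  rw [S.g_eq i]; rfl

theorem fst_not_used (i : S.Idx) : (S.g i).1 ∉ S.Used i := by
  rw [S.g_fst]; exact S.fstStep_spec i _

theorem snd_spec (i : S.Idx) :
    (S.g i).2 ∉ insert (S.g i).1 (S.Used i) ∧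
      |S.f (S.g i).1| + (S.n i : ℝ) < |S.f (S.g i).2| := by
  rw [S.g_fst, S.g_snd]; exact S.sndStep_spec i _

theorem mem_used {i j : S.Idx} (h : j < i) :
    (S.g j).1 ∈ S.Used i ∧ (S.g j).2 ∈ S.Used i :=
  ⟨Or.inl ⟨⟨j, h⟩, rfl⟩, Or.inr ⟨⟨j, h⟩, rfl⟩⟩

theorem fresh {i j : S.Idx} (h : j < i) :
    (S.g i).1 ≠ (S.g j).1 ∧ (S.g i).1 ≠ (S.g j).2 ∧
      (S.g i).2 ≠ (S.g j).1 ∧ (S.g i).2 ≠ (S.g j).2 := by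
  have h1 := S.fst_not_used i
  have h2 := (S.snd_spec i).1
  have hm := S.mem_used h
  refine ⟨fun e => h1 ?_, fun e => h1 ?_, fun e => h2 ?_, fun e => h2 ?_⟩
  · rw [e]; exact hm.1
  · rw [e]; exact hm.2
  · exact Set.mem_insert_iff.mpr (Or.inr (by rw [e]; exact hm.1))
  · exact Set.mem_insert_iff.mpr (Or.inr (by rw [e]; exact hm.2))

theorem fst_ne_snd (i : S.Idx) : (S.g i).1 ≠ (S.g i).2 := fun e =>
  (S.snd_spec i).1 (Set.mem_insert_iff.mpr (Or.inl e.symm))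

theorem fst_inj : Function.Injective (fun i => (S.g i).1) := by
  intro i j e
  by_contra hne
  rcases lt_or_gt_of_ne hne with h | h
  · exact (S.fresh h).1 e.symm
  · exact (S.fresh h).1 e

theorem snd_inj : Function.Injective (fun i => (S.g i).2) := by
  intro i j e
  by_contra hne
  rcases lt_or_gt_of_ne hne with h | h
  · exact (S.fresh h).2.2.2 e.symm
  · exact (S.fresh h).2.2.2 e

theorem fst_ne_snd' (i j : S.Idx) : (S.g i).1 ≠ (S.g j).2 := by
  rcases lt_trichotomy i j with h | rfl | h
  · exact fun e => (S.fresh h).2.2.1 e.symm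
  · exact S.fst_ne_snd i
  · exact (S.fresh h).2.1

open Classical in
/-- The swap function exchanging the two members of each pair. -/
noncomputable def swap (z : X) : X :=
  if h1 : ∃ i, (S.g i).1 = z then (S.g h1.choose).2
  else if h2 : ∃ i, (S.g i).2 = z then (S.g h2.choose).1
  else z

theorem swap_fst (i : S.Idx) : S.swap (S.g i).1 = (S.g i).2 := by
  have h1 : ∃ j, (S.g j).1 = (S.g i).1 := ⟨i, rfl⟩
  have he : h1.choose = i := S.fst_inj h1.choose_spec
  unfold swap
  rw [dif_pos h1, he]

theorem swap_snd (i : S.Idx) : S.swap (S.g i).2 = (S.g i).1 := by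
  have h1 : ¬∃ j, (S.g j).1 = (S.g i).2 := by
    rintro ⟨j, e⟩; exact S.fst_ne_snd' j i e
  have h2 : ∃ j, (S.g j).2 = (S.g i).2 := ⟨i, rfl⟩
  have he : h2.choose = i := S.snd_inj h2.choose_spec
  unfold swap
  rw [dif_neg h1, dif_pos h2, he]

theorem swap_invol : Function.Involutive S.swap := by
  intro z
  by_cases h1 : ∃ i, (S.g i).1 = z
  · obtain ⟨i, rfl⟩ := h1
    rw [S.swap_fst, S.swap_snd]
  · by_cases h2 : ∃ i, (S.g i).2 = z
    · obtain ⟨i, rfl⟩ := h2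
      rw [S.swap_snd, S.swap_fst]
    · have e : S.swap z = z := by unfold swap; rw [dif_neg h1, dif_neg h2]
      rw [e, e]

/-- The permutation swapping each pair. -/
noncomputable def perm : Equiv.Perm X :=
  Function.Involutive.toPerm S.swap S.swap_invol

theorem perm_apply (z : X) : S.perm z = S.swap z := rfl

end Setup

end EmuAux

/-- The ballean `B_{κ,μ}` is emu-bounded: if `f : X → ℝ` (with `|X| = κ ≥ μ`, `μ`
infinite) is eventually macro-uniform with respect to entourages given by families of
fewer than `μ` permutations, then `f` is bounded outside a set of cardinality `< μ`. -/
theorem permutation_ballean_emuBounded {X : Type u} (κ μ : Cardinal.{u})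
    (hμ : Cardinal.aleph0 ≤ μ) (hμκ : μ ≤ κ) (hX : Cardinal.mk X = κ)
    (f : X → ℝ)
    (hf : ∀ F : Set (Equiv.Perm X), Cardinal.mk F < μ →
      ∃ B : Set X, Cardinal.mk B < μ ∧ ∃ C : ℝ, ∀ x ∉ B,
        ∀ a ∈ permBall F x, ∀ b ∈ permBall F x, |f a - f b| ≤ C) :
    ∃ B : Set X, Cardinal.mk B < μ ∧ ∃ C : ℝ, ∀ x ∉ B, |f x| ≤ C := by
  classical
  by_contra hcon
  push_neg at hcon
  -- `hcon : ∀ B, #B < μ → ∀ C, ∃ x ∉ B, C < |f x|`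
  -- Build the level function with all fibers of cardinality `μ`.
  set ι : Type u := (Cardinal.ord μ).ToType with hι
  have hmkI : Cardinal.mk ι = μ := Cardinal.mk_ord_toType μ
  have hprod : Cardinal.mk (ℕ × ι) = Cardinal.mk ι := by
    rw [Cardinal.mk_prod, hmkI, Cardinal.mk_nat, Cardinal.lift_aleph0,
      Cardinal.lift_id']
    exact Cardinal.mul_eq_right hμ hμ Cardinal.aleph0_ne_zero
  have e : ℕ × ι ≃ ι := Classical.choice (Cardinal.eq.mp hprod)
  set n : ι → ℕ := fun i => (e.symm i).1 with hn
  have hfiber : ∀ m : ℕ, μ ≤ Cardinal.mk {i : ι | n i = m} := by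
    intro m
    have hinj : Function.Injective
        (fun j : ι => (⟨e (m, j), by simp [hn]⟩ : {i : ι | n i = m})) := by
      intro a b hab
      have : e (m, a) = e (m, b) := congrArg Subtype.val hab
      exact (Prod.mk.injEq _ _ _ _).mp (e.injective this) |>.2
    calc μ = Cardinal.mk ι := hmkI.symm
      _ ≤ _ := Cardinal.mk_le_of_injective hinj
  -- assemble the setup
  set S : EmuAux.Setup X := ⟨μ, f, hμ, hcon, n⟩ with hS
  obtain ⟨B, hB, C, hC⟩ := hf {S.perm} (by
    rw [Cardinal.mk_singleton]
    exact lt_of_lt_of_le Cardinal.one_lt_aleph0 hμ)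
  obtain ⟨m, hm⟩ := exists_nat_gt C
  -- indices whose pair meets `B` are few
  have hBad : Cardinal.mk {i : ι | (S.g i).1 ∈ B ∨ (S.g i).2 ∈ B} < μ := by
    have hsub : {i : ι | (S.g i).1 ∈ B ∨ (S.g i).2 ∈ B} ⊆
        ((fun i : ι => (S.g i).1) ⁻¹' B) ∪ ((fun i : ι => (S.g i).2) ⁻¹' B) :=
      fun i hi => hi
    refine lt_of_le_of_lt (Cardinal.mk_le_mk_of_subset hsub) ?_
    refine lt_of_le_of_lt (Cardinal.mk_union_le _ _)
      (Cardinal.add_lt_of_lt hμ ?_ ?_)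
    · exact lt_of_le_of_lt (Cardinal.mk_preimage_of_injective _ _ S.fst_inj) hB
    · exact lt_of_le_of_lt (Cardinal.mk_preimage_of_injective _ _ S.snd_inj) hB
  -- find a good index in the fiber over `m`
  have hnotsub : ¬({i : ι | n i = m} ⊆ {i : ι | (S.g i).1 ∈ B ∨ (S.g i).2 ∈ B}) := by
    intro hsub
    exact absurd ((hfiber m).trans (Cardinal.mk_le_mk_of_subset hsub))
      (not_le.mpr hBad)
  obtain ⟨i, hi, hibad⟩ := Set.not_subset.mp hnotsub
  simp only [Set.mem_setOf_eq, not_or] at hibad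
  -- apply the uniform bound at this pair
  have hmem1 : (S.g i).1 ∈ permBall {S.perm} (S.g i).1 := Set.mem_insert _ _
  have hmem2 : (S.g i).2 ∈ permBall {S.perm} (S.g i).1 := by
    refine Set.mem_insert_iff.mpr (Or.inr ⟨S.perm, Set.mem_singleton _, ?_⟩)
    exact S.swap_fst i
  have key := hC (S.g i).1 hibad.1 (S.g i).2 hmem2 (S.g i).1 hmem1
  have hdiff := (S.snd_spec i).2
  have hni : S.n i = m := hi
  rw [hni] at hdiff
  have habs : |f (S.g i).2| - |f (S.g i).1| ≤ |f (S.g i).2 - f (S.g i).1| :=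
    abs_sub_abs_le_abs_sub _ _
  have hSf : S.f = f := rfl
  rw [hSf] at hdiff
  linarith
end

section
/- Let 𝓔 be a ballean on an infinite set X. The following are equivalent: (1) every function f : X → ℝ is macro-uniform; (2) X is discrete and every bounded subset of X is finite. -/
/-- A ballean on a set `X`: a family of entourages containing the diagonal,
closed (up to enlargement) under `E ∘ F⁻¹`, and covering `X × X`. -/
structure Ballean (X : Type*) where
  ent : Set (Set (X × X))
  diag : ∀ E ∈ ent, ∀ x : X, (x, x) ∈ E
  comp : ∀ E ∈ ent, ∀ F ∈ ent, ∃ D ∈ ent,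
    ∀ x z : X, (∃ y : X, (x, y) ∈ E ∧ (z, y) ∈ F) → (x, z) ∈ D
  cover : ∀ x y : X, ∃ E ∈ ent, (x, y) ∈ E

/-- The ball `E[x] = {y : (x,y) ∈ E}`. -/
def ball {X : Type*} (E : Set (X × X)) (x : X) : Set X := {y | (x, y) ∈ E}

/-- A set is bounded in a ballean if it is contained in some ball. -/
def Ballean.Bdd {X : Type*} (B : Ballean X) (S : Set X) : Prop :=
  ∃ E ∈ B.ent, ∃ x : X, S ⊆ ball E x

/-- A ballean `X` is discrete if `X` is unbounded and every entourage `E` has a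
bounded set `B` with `E[x] = {x}` for all `x ∉ B`. -/
def Ballean.Discrete {X : Type*} (B : Ballean X) : Prop :=
  ¬ B.Bdd Set.univ ∧ ∀ E ∈ B.ent, ∃ S : Set X, B.Bdd S ∧ ∀ x ∉ S, ball E x = {x}

namespace Ballean

variable {X : Type*} (B : Ballean X)

lemma rev {F : Set (X × X)} (hF : F ∈ B.ent) :
    ∃ F' ∈ B.ent, ∀ a b : X, (a, b) ∈ F → (b, a) ∈ F' := by
  obtain ⟨D, hD, h⟩ := B.comp F hF F hF
  exact ⟨D, hD, fun a b hab => h b a ⟨b, B.diag F hF b, hab⟩⟩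

lemma trans' {E F : Set (X × X)} (hE : E ∈ B.ent) (hF : F ∈ B.ent) :
    ∃ D ∈ B.ent, ∀ a b c : X, (a, b) ∈ E → (b, c) ∈ F → (a, c) ∈ D := by
  obtain ⟨F', hF', hrev⟩ := B.rev hF
  obtain ⟨D, hD, h⟩ := B.comp E hE F' hF'
  exact ⟨D, hD, fun a b c h1 h2 => h a c ⟨b, h1, hrev b c h2⟩⟩

lemma union_ent {E F : Set (X × X)} (hE : E ∈ B.ent) (hF : F ∈ B.ent) :
    ∃ D ∈ B.ent, E ⊆ D ∧ F ⊆ D := by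
  obtain ⟨F', hF', hrev⟩ := B.rev hF
  obtain ⟨D, hD, h⟩ := B.comp E hE F' hF'
  refine ⟨D, hD, ?_, ?_⟩
  · rintro ⟨a, b⟩ hp
    exact h a b ⟨b, hp, B.diag F' hF' b⟩
  · rintro ⟨a, b⟩ hp
    exact h a b ⟨a, B.diag E hE a, hrev a b hp⟩

lemma bdd_mono {S T : Set X} (hST : S ⊆ T) (hT : B.Bdd T) : B.Bdd S := by
  obtain ⟨E, hE, x, hx⟩ := hT
  exact ⟨E, hE, x, hST.trans hx⟩

lemma bdd_ball {E : Set (X × X)} (hE : E ∈ B.ent) (x : X) : B.Bdd (ball E x) :=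
  ⟨E, hE, x, subset_rfl⟩

lemma bdd_empty [Nonempty X] : B.Bdd (∅ : Set X) := by
  obtain ⟨E, hE, -⟩ := B.cover (Classical.arbitrary X) (Classical.arbitrary X)
  exact ⟨E, hE, Classical.arbitrary X, Set.empty_subset _⟩

lemma bdd_union {S T : Set X} (hS : B.Bdd S) (hT : B.Bdd T) : B.Bdd (S ∪ T) := by
  obtain ⟨E, hE, x, hxS⟩ := hS
  obtain ⟨F, hF, z, hzT⟩ := hT
  obtain ⟨G, hG, hxz⟩ := B.cover x z
  obtain ⟨H, hH, hHtrans⟩ := B.trans' hG hF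
  obtain ⟨D, hD, hED, hHD⟩ := B.union_ent hE hH
  refine ⟨D, hD, x, ?_⟩
  rintro w (hw | hw)
  · exact hED (hxS hw)
  · exact hHD (hHtrans x z w hxz (hzT hw))

end Ballean

/-- For a ballean on an infinite set `X`: every function `f : X → ℝ` is
macro-uniform iff `X` is discrete and every bounded subset of `X` is finite. -/
theorem every_function_macroUniform_iff {X : Type*} [Infinite X] (B : Ballean X) :
    (∀ f : X → ℝ, ∀ E ∈ B.ent, ∃ C : ℝ, ∀ x : X,
        ∀ a ∈ ball E x, ∀ b ∈ ball E x, |f a - f b| ≤ C) ↔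
      (B.Discrete ∧ ∀ S : Set X, B.Bdd S → S.Finite) := by
  classical
  constructor
  · intro H
    -- First: every bounded set is finite.
    have hfin : ∀ S : Set X, B.Bdd S → S.Finite := by
      intro S hS
      by_contra hinf
      have hinf' : S.Infinite := hinf
      obtain ⟨E, hE, x₀, hSsub⟩ := hS
      let e := hinf'.natEmbedding
      let v : ℕ → X := fun n => (e n : X)
      have hvinj : Function.Injective v := fun m n h =>
        e.injective (Subtype.coe_injective h)
      have hvmem : ∀ n, v n ∈ S := fun n => (e n).2
      let f : X → ℝ := fun z => if h : ∃ n, v n = z then (h.choose : ℝ) else 0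
      have hfv : ∀ n, f (v n) = n := by
        intro n
        have h : ∃ m, v m = v n := ⟨n, rfl⟩
        have : h.choose = n := hvinj h.choose_spec
        simp only [f, dif_pos h, this]
      obtain ⟨C, hC⟩ := H f E hE
      obtain ⟨n, hn⟩ := exists_nat_gt C
      have h1 := hC x₀ (v n) (hSsub (hvmem n)) (v 0) (hSsub (hvmem 0))
      rw [hfv, hfv] at h1
      have h2 := le_abs_self ((n : ℝ) - (0 : ℕ))
      push_cast at h1 h2 ⊢
      linarith
    refine ⟨⟨fun hu => Set.infinite_univ (hfin _ hu), ?_⟩, hfin⟩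
    intro E hE
    by_contra hbad
    push_neg at hbad
    -- hbad : ∀ S, B.Bdd S → ∃ x ∉ S, ball E x ≠ {x}
    let xsel : Set X → X := fun S =>
      if h : ∃ x, x ∉ S ∧ ball E x ≠ {x} then h.choose else Classical.arbitrary X
    have hxsel : ∀ S, B.Bdd S → xsel S ∉ S ∧ ball E (xsel S) ≠ {xsel S} := by
      intro S hS
      obtain ⟨x, hx1, hx2⟩ := hbad S hS
      have h : ∃ x, x ∉ S ∧ ball E x ≠ {x} := ⟨x, hx1, hx2⟩
      simp only [xsel, dif_pos h]
      exact h.choose_spec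
    let ysel : X → X := fun x =>
      if h : ∃ y, y ∈ ball E x ∧ y ≠ x then h.choose else x
    have hysel : ∀ x, ball E x ≠ {x} → ysel x ∈ ball E x ∧ ysel x ≠ x := by
      intro x hx
      have h : ∃ y, y ∈ ball E x ∧ y ≠ x := by
        by_contra hc
        push_neg at hc
        exact hx (Set.eq_singleton_iff_unique_mem.mpr ⟨B.diag E hE x, hc⟩)
      simp only [ysel, dif_pos h]
      exact h.choose_spec
    let Bs : ℕ → Set X := fun n =>
      Nat.rec (∅ : Set X) (fun _ Bn => Bn ∪ ball E (xsel Bn)) n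
    have hBsS : ∀ n, Bs (n + 1) = Bs n ∪ ball E (xsel (Bs n)) := fun n => rfl
    have hBsBdd : ∀ n, B.Bdd (Bs n) := by
      intro n
      induction n with
      | zero => exact B.bdd_empty
      | succ n ih => exact B.bdd_union ih (B.bdd_ball hE _)
    let u : ℕ → X := fun n => xsel (Bs n)
    have hu : ∀ n, u n ∉ Bs n ∧ ball E (u n) ≠ {u n} := fun n => hxsel _ (hBsBdd n)
    have hmono : ∀ m n, m ≤ n → Bs m ⊆ Bs n := by
      intro m n hmn
      induction hmn with
      | refl => exact subset_rfl
      | step _ ih => exact ih.trans (by rw [hBsS]; exact Set.subset_union_left)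
    have hball : ∀ n, ball E (u n) ⊆ Bs (n + 1) := by
      intro n
      rw [hBsS]
      exact Set.subset_union_right
    have humem : ∀ m n, m < n → u m ∈ Bs n := fun m n h =>
      hmono (m + 1) n h (hball m (B.diag E hE (u m)))
    have huinj : Function.Injective u := by
      intro m n h
      by_contra hne
      rcases lt_or_gt_of_ne hne with hlt | hlt
      · exact (hu n).1 (h ▸ humem m n hlt)
      · exact (hu m).1 (h ▸ humem n m hlt)
    let y : ℕ → X := fun n => ysel (u n)
    have hy : ∀ n, y n ∈ ball E (u n) ∧ y n ≠ u n := fun n => hysel _ (hu n).2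
    have hyBs : ∀ n, y n ∈ Bs (n + 1) := fun n => hball n (hy n).1
    have key : ∀ n m, u m = y n → m < n := by
      intro n m h
      by_contra hle
      push_neg at hle
      rcases eq_or_lt_of_le hle with heq | hlt
      · exact (hy n).2 (h ▸ congrArg u heq.symm ▸ rfl)
      · exact (hu m).1 (h ▸ hmono (n + 1) m hlt (hyBs n))
    let f : X → ℝ := fun z => if h : ∃ n, u n = z then (2 : ℝ) ^ h.choose else 0
    have hfnonneg : ∀ z, 0 ≤ f z := by
      intro z
      simp only [f]
      split
      · positivity
      · exact le_refl 0
    have hfu : ∀ n, f (u n) = 2 ^ n := by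
      intro n
      have h : ∃ m, u m = u n := ⟨n, rfl⟩
      have : h.choose = n := huinj h.choose_spec
      simp only [f, dif_pos h, this]
    have hfy : ∀ n, f (y (n + 1)) ≤ 2 ^ n := by
      intro n
      by_cases h : ∃ m, u m = y (n + 1)
      · simp only [f, dif_pos h]
        have hlt : h.choose < n + 1 := key (n + 1) h.choose h.choose_spec
        exact pow_le_pow_right₀ one_le_two (Nat.lt_succ_iff.mp hlt)
      · simp only [f, dif_neg h]
        positivity
    obtain ⟨C, hC⟩ := H f E hE
    obtain ⟨n, hn⟩ := pow_unbounded_of_one_lt C (one_lt_two (α := ℝ))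
    have h1 := hC (u (n + 1)) (u (n + 1)) (B.diag E hE _) (y (n + 1)) (hy (n + 1)).1
    have h2 := hfy n
    have h3 := hfnonneg (y (n + 1))
    have h4 : (2 : ℝ) ^ (n + 1) = 2 * 2 ^ n := by ring
    have h5 := le_abs_self (f (u (n + 1)) - f (y (n + 1)))
    have h6 := hfu (n + 1)
    linarith
  · rintro ⟨⟨-, hdisc⟩, hfin⟩ f E hE
    obtain ⟨S, hSb, hS⟩ := hdisc E hE
    have hT : (⋃ x ∈ S, ball E x).Finite :=
      (hfin S hSb).biUnion fun x _ => hfin _ (B.bdd_ball hE x)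
    refine ⟨2 * ∑ y ∈ hT.toFinset, |f y|, ?_⟩
    intro x a ha b hb
    have hsum : ∀ c ∈ ⋃ x ∈ S, ball E x, |f c| ≤ ∑ y ∈ hT.toFinset, |f y| := by
      intro c hc
      exact Finset.single_le_sum (fun i _ => abs_nonneg (f i))
        (hT.mem_toFinset.mpr hc)
    have hsumnn : (0 : ℝ) ≤ ∑ y ∈ hT.toFinset, |f y| :=
      Finset.sum_nonneg fun i _ => abs_nonneg (f i)
    by_cases hx : x ∈ S
    · have haT : a ∈ ⋃ x ∈ S, ball E x := Set.mem_biUnion hx ha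
      have hbT : b ∈ ⋃ x ∈ S, ball E x := Set.mem_biUnion hx hb
      calc |f a - f b| ≤ |f a| + |f b| := abs_sub _ _
        _ ≤ _ := by have := hsum a haT; have := hsum b hbT; linarith
    · have heq := hS x hx
      rw [heq] at ha hb
      rw [Set.mem_singleton_iff] at ha hb
      rw [ha, hb]
      simp only [sub_self, abs_zero]
      linarith
end

section
/- Let 𝓔 be a ballean on a set X such that X is not bounded and every unbounded subset of X contains an unbounded subset Z such that every ultrafilter on Z which is closed under countable intersections is principal. If every function f : X → ℝ is eventually macro-uniform, then X is discrete. -/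
section Aux

variable {X : Type*} (B : Ballean X)

/-- Symmetrized enlargement: some entourage contains `E ∪ E⁻¹`. -/
lemma Ballean.sym {E : Set (X × X)} (hE : E ∈ B.ent) :
    ∃ E' ∈ B.ent, ∀ a b : X, ((a, b) ∈ E ∨ (b, a) ∈ E) → (a, b) ∈ E' := by
  obtain ⟨D, hD, hDs⟩ := B.comp E hE E hE
  refine ⟨D, hD, fun a b hab => ?_⟩
  rcases hab with h | h
  · exact hDs a b ⟨b, h, B.diag E hE b⟩
  · exact hDs a b ⟨a, B.diag E hE a, h⟩

lemma Ballean.bdd_subset {S T : Set X} (hT : B.Bdd T) (hST : S ⊆ T) : B.Bdd S := by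
  obtain ⟨E, hE, x, hx⟩ := hT
  exact ⟨E, hE, x, hST.trans hx⟩

lemma Ballean.bdd_union_s4 {S T : Set X} (hS : B.Bdd S) (hT : B.Bdd T) : B.Bdd (S ∪ T) := by
  obtain ⟨D1, hD1, x1, hx1⟩ := hS
  obtain ⟨D2, hD2, x2, hx2⟩ := hT
  obtain ⟨G, hG, hGx⟩ := B.cover x1 x2
  obtain ⟨D2', hD2', hD2's⟩ := B.sym hD2
  -- all of T is within an entourage-ball of x1
  obtain ⟨H, hH, hHs⟩ := B.comp G hG D2' hD2'
  have hT1 : T ⊆ ball H x1 := by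
    intro b hb
    exact hHs x1 b ⟨x2, hGx, hD2's b x2 (Or.inr (hx2 hb))⟩
  obtain ⟨H', hH', hH's⟩ := B.sym hH
  obtain ⟨K, hK, hKs⟩ := B.comp D1 hD1 H' hH'
  refine ⟨K, hK, x1, fun b hb => ?_⟩
  rcases hb with hb | hb
  · exact hKs x1 b ⟨b, hx1 hb, B.diag _ hH' b⟩
  · exact hKs x1 b ⟨x1, B.diag _ hD1 x1, hH's b x1 (Or.inr (hT1 hb))⟩

/-- The `E`-neighbourhood (in either direction) of a bounded set is bounded. -/
lemma Ballean.bdd_nbhd {E : Set (X × X)} (hE : E ∈ B.ent) {S : Set X} (hS : B.Bdd S) :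
    B.Bdd {w | ∃ v ∈ S, (v, w) ∈ E ∨ (w, v) ∈ E} := by
  obtain ⟨D, hD, x, hx⟩ := hS
  obtain ⟨E', hE', hE's⟩ := B.sym hE
  obtain ⟨K, hK, hKs⟩ := B.comp D hD E' hE'
  refine ⟨K, hK, x, fun w hw => ?_⟩
  obtain ⟨v, hvS, hv⟩ := hw
  refine hKs x w ⟨v, hx hvS, ?_⟩
  rcases hv with h | h
  · exact hE's w v (Or.inr h)
  · exact hE's w v (Or.inl h)

lemma Ballean.bdd_singleton (x : X) : B.Bdd {x} := by
  obtain ⟨E, hE, hxE⟩ := B.cover x x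
  exact ⟨E, hE, x, by intro y hy; rcases hy with rfl; exact hxE⟩

end Aux

/-- If `X` is an unbounded ballean in which every unbounded subset contains an
unbounded subset of non-measurable cardinality (every countably complete
ultrafilter on it is principal), and every `f : X → ℝ` is eventually
macro-uniform, then `X` is discrete. -/
theorem discrete_of_every_function_emu {X : Type*} (B : Ballean X)
    (hub : ¬ B.Bdd Set.univ)
    (hnm : ∀ S : Set X, ¬ B.Bdd S → ∃ Z ⊆ S, ¬ B.Bdd Z ∧
      ∀ U : Ultrafilter Z,
        (∀ s : ℕ → Set Z, (∀ n : ℕ, s n ∈ U) → (⋂ n : ℕ, s n) ∈ U) → ∃ z : Z, U = pure z)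
    (hemu : ∀ f : X → ℝ, ∀ E ∈ B.ent, ∃ S : Set X, B.Bdd S ∧ ∃ C : ℝ,
      ∀ x ∉ S, ∀ a ∈ ball E x, ∀ b ∈ ball E x, |f a - f b| ≤ C) :
    B.Discrete := by
  classical
  refine ⟨hub, fun E hE => ?_⟩
  by_contra hcon
  push_neg at hcon
  -- hcon : ∀ S, B.Bdd S → ∃ x ∉ S, ball E x ≠ {x}
  set A : Set X := {x | ∃ y, y ≠ x ∧ (x, y) ∈ E} with hAdef
  have hA : ¬ B.Bdd A := by
    intro hbdd
    obtain ⟨x, hxA, hball⟩ := hcon A hbdd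
    apply hball
    ext y
    constructor
    · intro hy
      by_contra hne
      exact hxA ⟨y, hne, hy⟩
    · intro hy
      rcases hy with rfl
      exact B.diag E hE _
  -- a choice of a non-trivial neighbour for each point of A
  set yf : X → X := fun x => if h : x ∈ A then h.choose else x with hyfdef
  have hy : ∀ x, x ∈ A → yf x ≠ x ∧ (x, yf x) ∈ E := by
    intro x hx
    have := hx.choose_spec
    simp only [hyfdef, dif_pos hx]
    exact this
  -- Zorn: a maximal `yf`-free subset of A
  obtain ⟨V, hVmax⟩ := zorn_subset {V : Set X | V ⊆ A ∧ ∀ z ∈ V, yf z ∉ V} (by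
    intro c hcS hchain
    refine ⟨⋃₀ c, ⟨?_, ?_⟩, fun s hs => Set.subset_sUnion_of_mem hs⟩
    · intro x hx
      obtain ⟨t, htc, hxt⟩ := hx
      exact (hcS htc).1 hxt
    · rintro z ⟨t1, ht1c, hzt1⟩ ⟨t2, ht2c, hzt2⟩
      rcases hchain.total ht1c ht2c with h | h
      · exact (hcS ht2c).2 z (h hzt1) hzt2
      · exact (hcS ht1c).2 z hzt1 (h hzt2))
  obtain ⟨⟨hVA, hVfree⟩, hmax⟩ := hVmax
  -- V is unbounded
  have hVub : ¬ B.Bdd V := by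
    intro hVbdd
    apply hA
    have hsub : A ⊆ V ∪ {w | ∃ v ∈ V, (v, w) ∈ E ∨ (w, v) ∈ E} := by
      intro z hz
      by_cases hzV : z ∈ V
      · exact Or.inl hzV
      right
      have hnot : ¬ (V ∪ {z} ⊆ A ∧ ∀ u ∈ V ∪ {z}, yf u ∉ V ∪ {z}) := by
        intro hmem
        have := hmax hmem (Set.subset_union_left)
        exact hzV (this (Or.inr rfl))
      push_neg at hnot
      have hsubA : V ∪ {z} ⊆ A := by
        intro u hu
        rcases hu with hu | hu
        · exact hVA hu
        · rcases hu with rfl; exact hz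
      obtain ⟨u, hu, hyu⟩ := hnot hsubA
      rcases hu with huV | huz
      · -- u ∈ V, so yf u ∉ V, hence yf u = z
        rcases hyu with h | h
        · exact absurd h (hVfree u huV)
        · rcases h with rfl
          exact ⟨u, huV, Or.inl (hy u (hVA huV)).2⟩
      · -- u = z
        rcases huz with rfl
        rcases hyu with h | h
        · exact ⟨yf u, h, Or.inr (hy u hz).2⟩
        · exact absurd (Set.eq_of_mem_singleton h) (hy u hz).1
    exact B.bdd_subset (B.bdd_union_s4 hVbdd (B.bdd_nbhd hE hVbdd)) hsub
  -- get a non-measurable unbounded Z ⊆ V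
  obtain ⟨Z, hZV, hZub, hZult⟩ := hnm V hVub
  -- the co-bounded filter on Z
  let F : Filter Z :=
    { sets := {s | ∃ Bs : Set X, B.Bdd Bs ∧ ∀ z : Z, (z : X) ∉ Bs → z ∈ s}
      univ_sets := by
        obtain ⟨S₀, hS₀, _⟩ := hemu (fun _ => 0) E hE
        exact ⟨S₀, hS₀, fun _ _ => trivial⟩
      sets_of_superset := by
        rintro s t ⟨Bs, hBs, hs⟩ hst
        exact ⟨Bs, hBs, fun z hz => hst (hs z hz)⟩
      inter_sets := by
        rintro s t ⟨Bs, hBs, hs⟩ ⟨Bt, hBt, ht⟩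
        refine ⟨Bs ∪ Bt, B.bdd_union_s4 hBs hBt, fun z hz => ?_⟩
        exact ⟨hs z (fun h => hz (Or.inl h)), ht z (fun h => hz (Or.inr h))⟩ }
  have hFmem : ∀ (Bs : Set X), B.Bdd Bs → {z : Z | (z : X) ∉ Bs} ∈ F := by
    intro Bs hBs
    exact ⟨Bs, hBs, fun z hz => hz⟩
  have hFne : F.NeBot := by
    rw [← Filter.forall_mem_nonempty_iff_neBot]
    rintro s ⟨Bs, hBs, hs⟩
    have hex : ∃ x ∈ Z, x ∉ Bs := by
      by_contra h
      push_neg at h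
      exact hZub (B.bdd_subset hBs h)
    obtain ⟨x, hxZ, hxB⟩ := hex
    exact ⟨⟨x, hxZ⟩, hs ⟨x, hxZ⟩ hxB⟩
  obtain ⟨U, hUF⟩ := @Ultrafilter.exists_le _ F hFne
  have hUmem : ∀ s ∈ F, s ∈ U := fun s hs => hUF hs
  -- U is not principal
  have hUnp : ∀ z₀ : Z, U ≠ pure z₀ := by
    intro z₀ hpure
    have h1 : {z : Z | (z : X) ∉ ({(z₀ : X)} : Set X)} ∈ U :=
      hUmem _ (hFmem _ (B.bdd_singleton (z₀ : X)))
    rw [hpure] at h1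
    exact h1 rfl
  -- hence U is not countably complete
  have hncc : ¬ ∀ s : ℕ → Set Z, (∀ n : ℕ, s n ∈ U) → (⋂ n : ℕ, s n) ∈ U := by
    intro hcc
    obtain ⟨z₀, hz₀⟩ := hZult U hcc
    exact hUnp z₀ hz₀
  push_neg at hncc
  obtain ⟨s, hsU, hsI⟩ := hncc
  -- build a decreasing sequence of members of U with empty intersection
  set t : ℕ → Set Z := fun n => (⋂ k ∈ Set.Iic n, s k) ∩ (⋂ m, s m)ᶜ with htdef
  have htU : ∀ n, t n ∈ U := by
    intro n
    refine Filter.inter_mem ?_ (Ultrafilter.compl_mem_iff_notMem.mpr hsI)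
    exact (Filter.biInter_mem (Set.finite_Iic n)).mpr (fun k _ => hsU k)
  have htanti : ∀ m n : ℕ, m ≤ n → t n ⊆ t m := by
    intro m n hmn z hz
    refine ⟨?_, hz.2⟩
    have := hz.1
    simp only [Set.mem_iInter] at this ⊢
    exact fun k hk => this k (le_trans hk hmn)
  have htempty : ∀ z : Z, ∃ n, z ∉ t n := by
    intro z
    by_contra h
    push_neg at h
    have hzI : z ∈ ⋂ m, s m := by
      rw [Set.mem_iInter]
      intro m
      have := (h m).1
      simp only [Set.mem_iInter] at this
      exact this m (by simp)
    exact (h 0).2 hzI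
  set g : Z → ℕ := fun z => Nat.find (htempty z) with hgdef
  have hg : ∀ (n : ℕ) (z : Z), z ∈ t n → n < g z := by
    intro n z hz
    rw [hgdef]
    rw [Nat.lt_find_iff]
    intro m hm hzm
    exact hzm (htanti m n hm hz)
  -- the function witnessing failure of EMU
  set f : X → ℝ := fun x => if h : x ∈ Z then ((g ⟨x, h⟩ : ℕ) : ℝ) else 0 with hfdef
  obtain ⟨S, hS, C, hC⟩ := hemu f E hE
  obtain ⟨n, hn⟩ := exists_nat_gt C
  have hcS : {z : Z | (z : X) ∉ S} ∈ U := hUmem _ (hFmem _ hS)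
  have : (t n ∩ {z : Z | (z : X) ∉ S}).Nonempty := by
    haveI := U.neBot
    exact Filter.nonempty_of_mem (Filter.inter_mem (htU n) hcS)
  obtain ⟨z, hzt, hzS⟩ := this
  have hxZ : (z : X) ∈ Z := z.2
  have hxV : (z : X) ∈ V := hZV hxZ
  have hxA : (z : X) ∈ A := hVA hxV
  obtain ⟨hyne, hyE⟩ := hy _ hxA
  have hyV : yf (z : X) ∉ V := hVfree _ hxV
  have hyZ : yf (z : X) ∉ Z := fun h => hyV (hZV h)
  -- evaluate f
  have hfz : f (z : X) = (g z : ℝ) := by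
    simp only [hfdef, dif_pos hxZ]
  have hfy : f (yf (z : X)) = 0 := by
    simp only [hfdef, dif_neg hyZ]
  have hball1 : (z : X) ∈ ball E (z : X) := B.diag E hE (z : X)
  have hball2 : yf (z : X) ∈ ball E (z : X) := hyE
  have hineq := hC (z : X) hzS (z : X) hball1 (yf (z : X)) hball2
  rw [hfz, hfy, sub_zero, abs_of_nonneg (by positivity)] at hineq
  have hgz : (n : ℝ) < (g z : ℝ) := by exact_mod_cast hg n z hzt
  linarith
end

section
/- Let 𝓑 be a bornology on a set X with X ∉ 𝓑 such that for every subset A ⊆ X either A ∈ 𝓑 or X∖A ∈ 𝓑 (that is, {X∖B : B ∈ 𝓑} is an ultrafilter on X). Then the following are equivalent: (1) for every function f : X → ℝ there exists B ∈ 𝓑 such that f is bounded on X∖B; (2) 𝓑 is σ-additive, i.e., closed under countable unions. -/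
/-- For an "ultradiscrete" bornology `𝓑` on `X` (i.e. `X ∉ 𝓑` and for each
`A ⊆ X` either `A` or its complement is bounded): every `f : X → ℝ` is bounded
outside some bounded set iff `𝓑` is σ-additive (closed under countable unions). -/
theorem ultradiscrete_bounded_iff_sigma_additive {X : Type*} (𝓑 : Set (Set X))
    (hcover : ∀ x : X, ∃ B ∈ 𝓑, x ∈ B)
    (hdown : ∀ A B : Set X, A ⊆ B → B ∈ 𝓑 → A ∈ 𝓑)
    (hunion : ∀ A ∈ 𝓑, ∀ B ∈ 𝓑, A ∪ B ∈ 𝓑)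
    (hX : Set.univ ∉ 𝓑)
    (hultra : ∀ A : Set X, A ∈ 𝓑 ∨ Aᶜ ∈ 𝓑) :
    (∀ f : X → ℝ, ∃ B ∈ 𝓑, ∃ C : ℝ, ∀ x ∉ B, |f x| ≤ C) ↔
      (∀ s : ℕ → Set X, (∀ n : ℕ, s n ∈ 𝓑) → (⋃ n : ℕ, s n) ∈ 𝓑) := by
  constructor
  · intro h1 s hs
    -- cumulative unions
    set t : ℕ → Set X := fun n => ⋃ k ∈ Finset.range (n + 1), s k with ht
    have htB : ∀ n, t n ∈ 𝓑 := by
      intro n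
      induction n with
      | zero =>
        apply hdown _ (s 0) _ (hs 0)
        intro x hx
        simp only [ht, Finset.range_one, Set.mem_iUnion] at hx ⊢
        rcases hx with ⟨k, hk, hx⟩
        obtain rfl : k = 0 := Nat.lt_one_iff.mp (Finset.mem_range.mp hk)
        exact hx
      | succ n ih =>
        apply hdown _ (t n ∪ s (n + 1)) _ (hunion _ ih _ (hs (n + 1)))
        intro x hx
        simp only [ht, Set.mem_iUnion, Finset.mem_range] at hx
        rcases hx with ⟨k, hk, hx⟩
        rcases Nat.lt_succ_iff_lt_or_eq.mp hk with hk' | rfl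
        · left
          simp only [ht, Set.mem_iUnion, Finset.mem_range]
          exact ⟨k, hk', hx⟩
        · right; exact hx
    have htmono : ∀ m n, m ≤ n → t m ⊆ t n := by
      intro m n hmn x hx
      simp only [ht, Set.mem_iUnion, Finset.mem_range] at hx ⊢
      rcases hx with ⟨k, hk, hx⟩
      exact ⟨k, lt_of_lt_of_le hk (by omega), hx⟩
    have hmem : ∀ x ∈ ⋃ n : ℕ, s n, ∃ n, x ∈ t n := by
      intro x hx
      rcases Set.mem_iUnion.mp hx with ⟨n, hn⟩
      refine ⟨n, ?_⟩
      simp only [ht, Set.mem_iUnion, Finset.mem_range]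
      exact ⟨n, Nat.lt_succ_self n, hn⟩
    classical
    set f : X → ℝ := fun x =>
      if hx : x ∈ ⋃ n : ℕ, s n then (Nat.find (hmem x hx) : ℝ) else 0 with hf
    obtain ⟨B, hB, C, hC⟩ := h1 f
    apply hdown _ (B ∪ t ⌈C⌉₊) _ (hunion _ hB _ (htB _))
    intro x hx
    by_cases hxB : x ∈ B
    · exact Or.inl hxB
    right
    have hfx := hC x hxB
    rw [hf] at hfx
    simp only [dif_pos hx] at hfx
    have h1' : (Nat.find (hmem x hx) : ℝ) ≤ C := le_trans (le_abs_self _) hfx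
    have h2' : Nat.find (hmem x hx) ≤ ⌈C⌉₊ := by
      have := le_trans h1' (Nat.le_ceil C)
      exact_mod_cast this
    exact htmono _ _ h2' (Nat.find_spec (hmem x hx))
  · intro h2 f
    by_cases h : ∃ n : ℕ, {x | |f x| ≤ n}ᶜ ∈ 𝓑
    · obtain ⟨n, hn⟩ := h
      refine ⟨_, hn, n, fun x hx => ?_⟩
      simpa using hx
    · push_neg at h
      have hall : ∀ n : ℕ, {x | |f x| ≤ n} ∈ 𝓑 := fun n =>
        (hultra _).resolve_right (h n)
      have : (⋃ n : ℕ, {x | |f x| ≤ n}) ∈ 𝓑 := h2 _ hall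
      have heq : (⋃ n : ℕ, {x : X | |f x| ≤ n}) = Set.univ := by
        ext x
        simp only [Set.mem_iUnion, Set.mem_setOf_eq, Set.mem_univ, iff_true]
        exact ⟨⌈|f x|⌉₊, Nat.le_ceil _⟩
      rw [heq] at this
      exact absurd this hX
end

section
/- If 𝓔_X is a ballean on X and 𝓔_Y is a ballean on Y and both are mu-bounded (every macro-uniform real-valued function on them is bounded), then the product ballean on X × Y is mu-bounded: every function f : X × Y → ℝ such that sup_{(x,y) ∈ X×Y} diam f(E[x] × F[y]) < ∞ for all E ∈ 𝓔_X and F ∈ 𝓔_Y is bounded. -/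
/-- A ballean is mu-bounded if every macro-uniform `f : X → ℝ` is bounded. -/
def Ballean.MuBounded {X : Type*} (B : Ballean X) : Prop :=
  ∀ f : X → ℝ,
    (∀ E ∈ B.ent, ∃ C : ℝ, ∀ x : X, ∀ a ∈ ball E x, ∀ b ∈ ball E x, |f a - f b| ≤ C) →
    ∃ C : ℝ, ∀ x : X, |f x| ≤ C

/-- The product of two mu-bounded balleans is mu-bounded: any `f : X × Y → ℝ`
which is macro-uniform for the product ballean (balls `E[x] × F[y]`) is bounded. -/
theorem prod_muBounded {X Y : Type*} (BX : Ballean X) (BY : Ballean Y)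
    (hX : BX.MuBounded) (hY : BY.MuBounded)
    (f : X × Y → ℝ)
    (hf : ∀ E ∈ BX.ent, ∀ F ∈ BY.ent, ∃ C : ℝ, ∀ (x : X) (y : Y),
      ∀ a ∈ (ball E x) ×ˢ (ball F y), ∀ b ∈ (ball E x) ×ˢ (ball F y),
        |f a - f b| ≤ C) :
    ∃ C : ℝ, ∀ p : X × Y, |f p| ≤ C := by
  rcases isEmpty_or_nonempty (X × Y) with hE | ⟨⟨x0, y0⟩⟩
  · exact ⟨0, fun p => isEmptyElim p⟩
  obtain ⟨F0, hF0, -⟩ := BY.cover y0 y0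
  -- the "slice" function g x = sup_y |f (x,y) - f (x0,y)|
  set g : X → ℝ := fun x => sSup {r | ∃ y : Y, r = |f (x, y) - f (x0, y)|} with hg
  -- For each x, the set is bounded above
  have hbdd : ∀ x : X, ∃ C : ℝ, ∀ y : Y, |f (x, y) - f (x0, y)| ≤ C := by
    intro x
    obtain ⟨E1, hE1, hx⟩ := BX.cover x0 x
    obtain ⟨C, hC⟩ := hf E1 hE1 F0 hF0
    refine ⟨C, fun y => ?_⟩
    exact hC x0 y (x, y) ⟨hx, BY.diag F0 hF0 y⟩ (x0, y) ⟨BX.diag E1 hE1 x0, BY.diag F0 hF0 y⟩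
  have hbddAbove : ∀ x : X, BddAbove {r | ∃ y : Y, r = |f (x, y) - f (x0, y)|} := by
    intro x
    obtain ⟨C, hC⟩ := hbdd x
    exact ⟨C, fun r ⟨y, hy⟩ => hy ▸ hC y⟩
  have hle : ∀ x : X, ∀ y : Y, |f (x, y) - f (x0, y)| ≤ g x := fun x y =>
    le_csSup (hbddAbove x) ⟨y, rfl⟩
  have hgnonneg : ∀ x : X, 0 ≤ g x := fun x =>
    le_trans (abs_nonneg _) (hle x y0)
  -- g is macro-uniform
  have hgmu : ∀ E ∈ BX.ent, ∃ C : ℝ, ∀ x : X, ∀ a ∈ ball E x, ∀ b ∈ ball E x,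
      |g a - g b| ≤ C := by
    intro E hEe
    obtain ⟨C, hC⟩ := hf E hEe F0 hF0
    have hC0 : 0 ≤ C := by
      have := hC x0 y0 (x0, y0) ⟨BX.diag E hEe x0, BY.diag F0 hF0 y0⟩
        (x0, y0) ⟨BX.diag E hEe x0, BY.diag F0 hF0 y0⟩
      simpa using this
    refine ⟨C, fun x a ha b hb => ?_⟩
    have key : ∀ u ∈ ball E x, ∀ v ∈ ball E x, g u ≤ g v + C := by
      intro u hu v hv
      refine Real.sSup_le ?_ (add_nonneg (hgnonneg v) hC0)
      rintro r ⟨y, rfl⟩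
      have h1 : |f (u, y) - f (x0, y)| ≤ |f (v, y) - f (x0, y)| + |f (u, y) - f (v, y)| := by
        have := abs_sub_abs_le_abs_sub (f (u, y) - f (x0, y)) (f (v, y) - f (x0, y))
        calc |f (u, y) - f (x0, y)|
            ≤ |f (v, y) - f (x0, y)| + |(f (u, y) - f (x0, y)) - (f (v, y) - f (x0, y))| := by
              have := abs_sub_le (f (u, y) - f (x0, y)) (f (v, y) - f (x0, y)) 0
              nlinarith [abs_sub_le (f (u, y) - f (x0, y)) (f (v, y) - f (x0, y)) 0,
                abs_add_le (f (v, y) - f (x0, y)) ((f (u, y) - f (x0, y)) - (f (v, y) - f (x0, y)))]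
          _ = |f (v, y) - f (x0, y)| + |f (u, y) - f (v, y)| := by ring_nf
      have h2 : |f (u, y) - f (v, y)| ≤ C :=
        hC x y (u, y) ⟨hu, BY.diag F0 hF0 y⟩ (v, y) ⟨hv, BY.diag F0 hF0 y⟩
      exact h1.trans (add_le_add (hle v y) h2)
    have := key a ha b hb
    have := key b hb a ha
    rw [abs_sub_le_iff]
    constructor <;> linarith
  obtain ⟨C1, hC1⟩ := hX g hgmu
  -- the function h y = f (x0, y) is macro-uniform on Y
  have hhmu : ∀ F ∈ BY.ent, ∃ C : ℝ, ∀ y : Y, ∀ a ∈ ball F y, ∀ b ∈ ball F y,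
      |f (x0, a) - f (x0, b)| ≤ C := by
    intro F hFe
    obtain ⟨E0, hE0, -⟩ := BX.cover x0 x0
    obtain ⟨C, hC⟩ := hf E0 hE0 F hFe
    refine ⟨C, fun y a ha b hb => ?_⟩
    exact hC x0 y (x0, a) ⟨BX.diag E0 hE0 x0, ha⟩ (x0, b) ⟨BX.diag E0 hE0 x0, hb⟩
  obtain ⟨C2, hC2⟩ := hY (fun y => f (x0, y)) hhmu
  refine ⟨C1 + C2, fun ⟨x, y⟩ => ?_⟩
  have h1 : |f (x, y) - f (x0, y)| ≤ g x := hle x y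
  have h2 : g x ≤ C1 := (le_abs_self _).trans (hC1 x)
  have h3 : |f (x0, y)| ≤ C2 := hC2 y
  calc |f (x, y)| ≤ |f (x, y) - f (x0, y)| + |f (x0, y)| := by
        have := abs_add_le (f (x, y) - f (x0, y)) (f (x0, y)); simpa using this
    _ ≤ C1 + C2 := by linarith
end

section
/- Let 𝓔_X be a ballean on X and 𝓔_Y a ballean on Y, both unbounded, with cov(𝓑_X) < add(𝓑_Y), and assume the bornology 𝓑_X is tall (every infinite subset of X has an infinite bounded subset). If X and Y are both emu-bounded, then the product ballean on X × Y is emu-bounded. -/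
universe u

/-- `cof 𝓑`: minimal cardinality of a cofinal subfamily of `𝓑`. -/
noncomputable def bornCof {X : Type u} (𝓑 : Set (Set X)) : Cardinal.{u} :=
  sInf {c : Cardinal.{u} | ∃ 𝓐 : Set (Set X), 𝓐 ⊆ 𝓑 ∧ Cardinal.mk 𝓐 = c ∧
    ∀ B ∈ 𝓑, ∃ A ∈ 𝓐, B ⊆ A}

/-- `non 𝓑`: minimal cardinality of a subset of `X` not in `𝓑`. -/
noncomputable def bornNon {X : Type u} (𝓑 : Set (Set X)) : Cardinal.{u} :=
  sInf {c : Cardinal.{u} | ∃ A : Set X, A ∉ 𝓑 ∧ Cardinal.mk A = c}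

/-- `cov 𝓑`: minimal cardinality of a subfamily of `𝓑` covering `X`. -/
noncomputable def bornCov {X : Type u} (𝓑 : Set (Set X)) : Cardinal.{u} :=
  sInf {c : Cardinal.{u} | ∃ 𝓐 : Set (Set X), 𝓐 ⊆ 𝓑 ∧ Cardinal.mk 𝓐 = c ∧
    ⋃₀ 𝓐 = Set.univ}

/-- `add 𝓑`: minimal cardinality of a subfamily of `𝓑` whose union is not in `𝓑`. -/
noncomputable def bornAdd {X : Type u} (𝓑 : Set (Set X)) : Cardinal.{u} :=
  sInf {c : Cardinal.{u} | ∃ 𝓐 : Set (Set X), 𝓐 ⊆ 𝓑 ∧ Cardinal.mk 𝓐 = c ∧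
    ⋃₀ 𝓐 ∉ 𝓑}

/-- A ballean is emu-bounded if every eventually macro-uniform `f : X → ℝ` is
bounded outside some bounded set. -/
def Ballean.EmuBounded {X : Type*} (B : Ballean X) : Prop :=
  ∀ f : X → ℝ,
    (∀ E ∈ B.ent, ∃ S : Set X, B.Bdd S ∧ ∃ C : ℝ,
      ∀ x ∉ S, ∀ a ∈ ball E x, ∀ b ∈ ball E x, |f a - f b| ≤ C) →
    ∃ S : Set X, B.Bdd S ∧ ∃ C : ℝ, ∀ x ∉ S, |f x| ≤ C

/-!
Comparing with the slice through one of its points, `f` is bounded on every strip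
`A × (Y ∖ T)` with `A` bounded and `T` a suitable bounded set. Cover `X` by `cov 𝓑_X` bounded
sets `A`; since `cov 𝓑_X < add 𝓑_Y`, the union `T` of the corresponding sets is still bounded,
and every row of `f` is bounded off `T`. The row supremum `φ x = sup_{y ∉ T} |f (x, y)|` is
then eventually macro-uniform on `X`, hence bounded outside a bounded `S` as `X` is
emu-bounded; strips along `S` and along `T` take care of the rest.
-/

open Set
open scoped Cardinal

namespace Ballean

variable {Z : Type*}

def EventuallyMacroUniform (B : Ballean Z) (f : Z → ℝ) : Prop :=
  ∀ E ∈ B.ent, ∃ S : Set Z, B.Bdd S ∧ ∃ C : ℝ,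
    ∀ x ∉ S, ∀ a ∈ ball E x, ∀ b ∈ ball E x, |f a - f b| ≤ C

lemma bdd_singleton_s11 (B : Ballean Z) (x : Z) : B.Bdd {x} := by
  obtain ⟨E, hE, hxx⟩ := B.cover x x
  exact ⟨E, hE, x, singleton_subset_iff.2 hxx⟩

variable {B : Ballean Z}

lemma exists_symm_subset {F : Set (Z × Z)} (hF : F ∈ B.ent) :
    ∃ D ∈ B.ent, ∀ a b : Z, (a, b) ∈ F → (b, a) ∈ D := by
  obtain ⟨D, hD, hp⟩ := B.comp F hF F hF
  exact ⟨D, hD, fun a b hab => hp b a ⟨b, B.diag F hF b, hab⟩⟩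

lemma exists_union_subset {E F : Set (Z × Z)} (hE : E ∈ B.ent) (hF : F ∈ B.ent) :
    ∃ D ∈ B.ent, E ⊆ D ∧ F ⊆ D := by
  obtain ⟨F', hF', hsymm⟩ := exists_symm_subset hF
  obtain ⟨D, hD, hp⟩ := B.comp E hE F' hF'
  exact ⟨D, hD, fun ⟨x, z⟩ h => hp x z ⟨z, h, B.diag F' hF' z⟩,
    fun ⟨x, z⟩ h => hp x z ⟨x, B.diag E hE x, hsymm x z h⟩⟩

lemma Bdd.union {S S' : Set Z} (hS : B.Bdd S) (hS' : B.Bdd S') : B.Bdd (S ∪ S') := by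
  obtain ⟨E, hE, x, hx⟩ := hS
  obtain ⟨F, hF, x', hx'⟩ := hS'
  obtain ⟨G, hG, hxx'⟩ := B.cover x x'
  obtain ⟨F', hF', hsymm⟩ := exists_symm_subset hF
  obtain ⟨D, hD, hp⟩ := B.comp G hG F' hF'
  obtain ⟨K, hK, hEK, hDK⟩ := exists_union_subset hE hD
  refine ⟨K, hK, x, union_subset (fun z hz => hEK (hx hz)) fun z hz => hDK ?_⟩
  exact hp x z ⟨x', hxx', hsymm x' z (hx' hz)⟩

lemma Bdd.thicken {S : Set Z} (hS : B.Bdd S) {E : Set (Z × Z)} (hE : E ∈ B.ent) :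
    B.Bdd {x | ∃ z ∈ S, (x, z) ∈ E} := by
  obtain ⟨G, hG, x₀, hx₀⟩ := hS
  obtain ⟨D, hD, hp⟩ := B.comp G hG E hE
  exact ⟨D, hD, x₀, fun x ⟨z, hz, hxz⟩ => hp x₀ x ⟨z, hx₀ hz, hxz⟩⟩

end Ballean

section Bornology

variable {X : Type u} {𝓑 : Set (Set X)}

lemma exists_sUnion_eq_univ_mk_eq_bornCov (h : ∀ x, {x} ∈ 𝓑) :
    ∃ 𝓐 ⊆ 𝓑, #𝓐 = bornCov 𝓑 ∧ ⋃₀ 𝓐 = univ :=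
  csInf_mem (s := {c | ∃ 𝓐 ⊆ 𝓑, #𝓐 = c ∧ ⋃₀ 𝓐 = univ})
    ⟨_, 𝓑, subset_rfl, rfl, sUnion_eq_univ_iff.2 fun x => ⟨{x}, h x, rfl⟩⟩

lemma iUnion_mem_of_mk_lt_bornAdd {ι : Type u} {T : ι → Set X} (hT : ∀ i, T i ∈ 𝓑)
    (hι : #ι < bornAdd 𝓑) : ⋃ i, T i ∈ 𝓑 := by
  by_contra h
  have hadd : bornAdd 𝓑 ≤ #(range T) :=
    csInf_le' ⟨range T, range_subset_iff.2 hT, rfl, by rwa [sUnion_range]⟩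
  exact (hadd.trans Cardinal.mk_range_le).not_gt hι

end Bornology

section Product

variable {X Y : Type*}

def ProdEventuallyMacroUniform (BX : Ballean X) (BY : Ballean Y) (f : X × Y → ℝ) : Prop :=
  ∀ E ∈ BX.ent, ∀ F ∈ BY.ent,
    ∃ (S : Set X) (T : Set Y), BX.Bdd S ∧ BY.Bdd T ∧ ∃ C : ℝ,
      ∀ p : X × Y, p ∉ S ×ˢ T →
        ∀ a ∈ (ball E p.1) ×ˢ (ball F p.2), ∀ b ∈ (ball E p.1) ×ˢ (ball F p.2),
          |f a - f b| ≤ C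

def StripBounded (BX : Ballean X) (BY : Ballean Y) (f : X × Y → ℝ) : Prop :=
  ∀ A : Set X, BX.Bdd A →
    ∃ T : Set Y, BY.Bdd T ∧ ∃ C : ℝ, ∀ x ∈ A, ∀ y ∉ T, |f (x, y)| ≤ C

noncomputable def rowSup (f : X × Y → ℝ) (T : Set Y) (x : X) : ℝ :=
  sSup ((fun y => |f (x, y)|) '' Tᶜ)

variable {BX : Ballean X} {BY : Ballean Y} {f : X × Y → ℝ}

lemma rowSup_nonneg (f : X × Y → ℝ) (T : Set Y) (x : X) : 0 ≤ rowSup f T x :=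
  Real.sSup_nonneg (forall_mem_image.2 fun _ _ => abs_nonneg _)

lemma abs_le_rowSup {T : Set Y} {x : X} (h : BddAbove ((fun y => |f (x, y)|) '' Tᶜ)) {y : Y}
    (hy : y ∉ T) : |f (x, y)| ≤ rowSup f T x :=
  le_csSup h ⟨y, hy, rfl⟩

lemma rowSup_le {T : Set Y} (hT : Tᶜ.Nonempty) {x : X} {C : ℝ}
    (h : ∀ y ∉ T, |f (x, y)| ≤ C) : rowSup f T x ≤ C :=
  csSup_le (hT.image _) (forall_mem_image.2 h)

namespace ProdEventuallyMacroUniform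

lemma swap (hf : ProdEventuallyMacroUniform BX BY f) :
    ProdEventuallyMacroUniform BY BX (f ∘ Prod.swap) := by
  intro F hF E hE
  obtain ⟨S, T, hS, hT, C, hC⟩ := hf E hE F hF
  exact ⟨T, S, hT, hS, C, fun p hp a ha b hb =>
    hC p.swap (fun h => hp ⟨h.2, h.1⟩) a.swap ⟨ha.2, ha.1⟩ b.swap ⟨hb.2, hb.1⟩⟩

lemma slice (hf : ProdEventuallyMacroUniform BX BY f) (x₀ : X) :
    BY.EventuallyMacroUniform (fun y => f (x₀, y)) := by
  intro F hF
  obtain ⟨E, hE, -⟩ := BX.cover x₀ x₀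
  obtain ⟨_, T, -, hT, C, hC⟩ := hf E hE F hF
  have hx₀ : x₀ ∈ ball E x₀ := BX.diag E hE x₀
  exact ⟨T, hT, C, fun y hy a ha b hb =>
    hC (x₀, y) (fun h => hy h.2) (x₀, a) ⟨hx₀, ha⟩ (x₀, b) ⟨hx₀, hb⟩⟩

lemma stripBounded (hf : ProdEventuallyMacroUniform BX BY f) (hY : BY.EmuBounded) :
    StripBounded BX BY f := by
  rintro A ⟨E, hE, x₀, hA⟩
  obtain ⟨T₀, hT₀, C₀, hC₀⟩ := hY _ (hf.slice x₀)
  have ⟨F, hF, _⟩ := hT₀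
  obtain ⟨_, T, -, hT, C, hC⟩ := hf E hE F hF
  refine ⟨T₀ ∪ T, hT₀.union hT, C₀ + C, fun x hx y hy => ?_⟩
  have hx₀y : |f (x₀, y)| ≤ C₀ := hC₀ y fun h => hy (Or.inl h)
  have hxx₀ : |f (x, y) - f (x₀, y)| ≤ C := hC (x₀, y) (fun h => hy (Or.inr h.2))
    (x, y) ⟨hA hx, BY.diag F hF y⟩ (x₀, y) ⟨BX.diag E hE x₀, BY.diag F hF y⟩
  linarith [abs_sub_abs_le_abs_sub (f (x, y)) (f (x₀, y))]

lemma eventuallyMacroUniform_rowSup (hf : ProdEventuallyMacroUniform BX BY f)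
    (hcol : StripBounded BY BX (f ∘ Prod.swap)) {T : Set Y} (hT : BY.Bdd T)
    (hTc : Tᶜ.Nonempty) (hrow : ∀ x, BddAbove ((fun y => |f (x, y)|) '' Tᶜ)) :
    BX.EventuallyMacroUniform (rowSup f T) := by
  intro E hE
  have ⟨F, hF, _⟩ := hT
  obtain ⟨_, T', -, hT', C, hC⟩ := hf E hE F hF
  obtain ⟨S, hS, D, hD⟩ := hcol T' hT'
  refine ⟨{x | ∃ z ∈ S, (x, z) ∈ E}, hS.thicken hE, max C D, fun x hx => ?_⟩
  have key : ∀ c ∈ ball E x, ∀ d ∈ ball E x, rowSup f T c ≤ rowSup f T d + max C D := by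
    intro c hc d hd
    refine rowSup_le hTc fun y hy => ?_
    by_cases hyT' : y ∈ T'
    · have hcy : |f (c, y)| ≤ D := hD y hyT' c fun hcS => hx ⟨c, hcS, hc⟩
      linarith [rowSup_nonneg f T d, le_max_right C D]
    · have hcd : |f (c, y) - f (d, y)| ≤ C := hC (x, y) (fun h => hyT' h.2)
        (c, y) ⟨hc, BY.diag F hF y⟩ (d, y) ⟨hd, BY.diag F hF y⟩
      linarith [abs_le_rowSup (hrow d) hy, abs_sub_abs_le_abs_sub (f (c, y)) (f (d, y)),
        le_max_left C D]
  intro a ha b hb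
  exact abs_sub_le_iff.2 ⟨by linarith [key a ha b hb], by linarith [key b hb a ha]⟩

end ProdEventuallyMacroUniform

lemma StripBounded.exists_bound_off_prod (hrow : StripBounded BX BY f)
    (hcol : StripBounded BY BX (f ∘ Prod.swap)) {S : Set X} {T : Set Y} (hS : BX.Bdd S)
    (hT : BY.Bdd T) {C : ℝ} (hC : ∀ x ∉ S, ∀ y ∉ T, |f (x, y)| ≤ C) :
    ∃ (S : Set X) (T : Set Y), BX.Bdd S ∧ BY.Bdd T ∧
      ∃ C : ℝ, ∀ p : X × Y, p ∉ S ×ˢ T → |f p| ≤ C := by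
  obtain ⟨S₁, hS₁, C₁, hC₁⟩ := hcol T hT
  obtain ⟨T₂, hT₂, C₂, hC₂⟩ := hrow (S ∪ S₁) (hS.union hS₁)
  refine ⟨S ∪ S₁, T ∪ T₂, hS.union hS₁, hT.union hT₂, max C (max C₁ C₂), ?_⟩
  rintro ⟨x, y⟩ hp
  by_cases hx : x ∈ S ∪ S₁
  · have hy : y ∉ T ∪ T₂ := fun hy => hp ⟨hx, hy⟩
    exact le_max_of_le_right (le_max_of_le_right (hC₂ x hx y fun h => hy (Or.inr h)))
  by_cases hy : y ∈ T
  · exact le_max_of_le_right (le_max_of_le_left (hC₁ y hy x fun h => hx (Or.inr h)))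
  · exact le_max_of_le_left (hC x (fun h => hx (Or.inl h)) y hy)

end Product

theorem exists_bdd_forall_bddAbove {X Y : Type u} {BX : Ballean X} {BY : Ballean Y}
    {f : X × Y → ℝ} (hcard : bornCov {S | BX.Bdd S} < bornAdd {T | BY.Bdd T})
    (hf : StripBounded BX BY f) :
    ∃ T, BY.Bdd T ∧ ∀ x, BddAbove ((fun y => |f (x, y)|) '' Tᶜ) := by
  obtain ⟨𝓐, h𝓐, h𝓐card, h𝓐cover⟩ :=
    exists_sUnion_eq_univ_mk_eq_bornCov (𝓑 := {S | BX.Bdd S}) BX.bdd_singleton_s11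
  choose T hT C hC using fun A : 𝓐 => hf A (h𝓐 A.2)
  have hTbdd : BY.Bdd (⋃ A, T A) :=
    iUnion_mem_of_mk_lt_bornAdd (𝓑 := {T | BY.Bdd T}) hT (h𝓐card ▸ hcard)
  refine ⟨⋃ A, T A, hTbdd, fun x => ?_⟩
  obtain ⟨A, hA, hxA⟩ := sUnion_eq_univ_iff.1 h𝓐cover x
  exact ⟨C ⟨A, hA⟩, forall_mem_image.2 fun y hy =>
    hC _ x hxA y fun h => hy (mem_iUnion_of_mem _ h)⟩

theorem prod_emuBounded_of_cov_lt_add_tall_general {X Y : Type u} (BX : Ballean X) (BY : Ballean Y)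
    (hYu : ¬ BY.Bdd Set.univ)
    (hcard : bornCov {S : Set X | BX.Bdd S} < bornAdd {T : Set Y | BY.Bdd T})
    (hXemu : BX.EmuBounded) (hYemu : BY.EmuBounded) :
    ∀ f : X × Y → ℝ,
      (∀ E ∈ BX.ent, ∀ F ∈ BY.ent,
        ∃ (S : Set X) (T : Set Y), BX.Bdd S ∧ BY.Bdd T ∧ ∃ C : ℝ,
          ∀ p : X × Y, p ∉ S ×ˢ T →
            ∀ a ∈ (ball E p.1) ×ˢ (ball F p.2), ∀ b ∈ (ball E p.1) ×ˢ (ball F p.2),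
              |f a - f b| ≤ C) →
      ∃ (S : Set X) (T : Set Y), BX.Bdd S ∧ BY.Bdd T ∧
        ∃ C : ℝ, ∀ p : X × Y, p ∉ S ×ˢ T → |f p| ≤ C := by
  intro f hf
  replace hf : ProdEventuallyMacroUniform BX BY f := hf
  have hrow : StripBounded BX BY f := hf.stripBounded hYemu
  have hcol : StripBounded BY BX (f ∘ Prod.swap) := hf.swap.stripBounded hXemu
  obtain ⟨T, hT, hbdd⟩ := exists_bdd_forall_bddAbove hcard hrow
  have hTc : Tᶜ.Nonempty := nonempty_compl.2 fun h => hYu (h ▸ hT)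
  obtain ⟨S, hS, C, hC⟩ := hXemu _ (hf.eventuallyMacroUniform_rowSup hcol hT hTc hbdd)
  exact hrow.exists_bound_off_prod hcol hS hT fun x hx y hy =>
    (abs_le_rowSup (hbdd x) hy).trans ((le_abs_self _).trans (hC x hx))

/-- If `X`, `Y` are unbounded emu-bounded balleans with `cov 𝓑_X < add 𝓑_Y`
and tall bornology `𝓑_X`, then the product ballean on `X × Y` is emu-bounded. -/
theorem prod_emuBounded_of_cov_lt_add_tall {X Y : Type u} (BX : Ballean X) (BY : Ballean Y)
    (hXu : ¬ BX.Bdd Set.univ) (hYu : ¬ BY.Bdd Set.univ)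
    (hcard : bornCov {S : Set X | BX.Bdd S} < bornAdd {T : Set Y | BY.Bdd T})
    (htall : ∀ A : Set X, A.Infinite → ∃ C ⊆ A, C.Infinite ∧ BX.Bdd C)
    (hXemu : BX.EmuBounded) (hYemu : BY.EmuBounded) :
    ∀ f : X × Y → ℝ,
      (∀ E ∈ BX.ent, ∀ F ∈ BY.ent,
        ∃ (S : Set X) (T : Set Y), BX.Bdd S ∧ BY.Bdd T ∧ ∃ C : ℝ,
          ∀ p : X × Y, p ∉ S ×ˢ T →
            ∀ a ∈ (ball E p.1) ×ˢ (ball F p.2), ∀ b ∈ (ball E p.1) ×ˢ (ball F p.2),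
              |f a - f b| ≤ C) →
      ∃ (S : Set X) (T : Set Y), BX.Bdd S ∧ BY.Bdd T ∧
        ∃ C : ℝ, ∀ p : X × Y, p ∉ S ×ˢ T → |f p| ≤ C :=
  prod_emuBounded_of_cov_lt_add_tall_general BX BY hYu hcard hXemu hYemu
end

section
/- Let κ be an infinite regular cardinal and G a group of cardinality κ. Then the κ-ballean of G is not so-bounded: there exists a function f : G → ℝ that is slowly oscillating with respect to the κ-ballean but, for every B ⊆ G with |B| < κ, f is unbounded on G∖B. -/
/-!
If `κ > ℵ₀`, write `G` as the union of an increasing chain `(H i)` of subgroups of size `< κ`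
such that every subset of size `< κ` lies in some `H i`. For `g ∈ H i` and `x ∉ H i`, the
elements `g * x` and `x` lie in exactly the same `H j`, so any function of the profile
`{j | x ∈ H j}` is constant on the balls centred outside `H i`. By regularity there are `κ`
profiles, and we send them to `ℕ` with fibres of size `κ`.

If `κ = ℵ₀`, enumerate `G` as `g₀, g₁, …` and let `ℓ x` be the least `n` such that `x` is a
product of `n` elements of `{1, g₀, …, gₙ₋₁}`. Then `ℓ` tends to infinity along the cofinite
filter and `ℓ (g * x) ≤ ℓ x + 1` as soon as `ℓ x` exceeds the index of `g`, so the harmonic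
number of `ℓ x` oscillates slowly but is unbounded.
-/

universe u

/-- The ball `E_F[x] = {x} ∪ Fx` of the `κ`-ballean of a group. -/
def grpBall {G : Type*} [Group G] (F : Set G) (x : G) : Set G :=
  insert x ((fun g => g * x) '' F)

open Cardinal Set Filter Topology
open scoped Pointwise

section Ballean

variable {G : Type u} [Group G]

def IsSlowlyOscillating (κ : Cardinal.{u}) (f : G → ℝ) : Prop :=
  ∀ F : Set G, #F < κ → ∀ ε : ℝ, 0 < ε →
    ∃ B : Set G, #B < κ ∧ ∀ x ∉ B, ∀ a ∈ grpBall F x, ∀ b ∈ grpBall F x, |f a - f b| < ε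

variable {κ : Cardinal.{u}} {f : G → ℝ}

theorem IsSlowlyOscillating.of_forall_mul
    (h : ∀ F : Set G, #F < κ → ∀ ε : ℝ, 0 < ε →
      ∃ B : Set G, #B < κ ∧ ∀ x ∉ B, ∀ g ∈ F, |f (g * x) - f x| < ε) :
    IsSlowlyOscillating κ f := by
  intro F hF ε hε
  obtain ⟨B, hB, hclose⟩ := h F hF (ε / 2) (half_pos hε)
  refine ⟨B, hB, fun x hx a ha b hb => ?_⟩
  have hcenter : ∀ c ∈ grpBall F x, |f c - f x| < ε / 2 := by
    rintro c (rfl | ⟨g, hg, rfl⟩)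
    · simpa using half_pos hε
    · exact hclose x hx g hg
  calc |f a - f b| ≤ |f a - f x| + |f x - f b| := abs_sub_le _ _ _
    _ < ε / 2 + ε / 2 := add_lt_add (hcenter a ha) (abs_sub_comm (f b) (f x) ▸ hcenter b hb)
    _ = ε := add_halves ε

end Ballean

def IsUnboundedOffSmall {α : Type u} (κ : Cardinal.{u}) (f : α → ℝ) : Prop :=
  ∀ B : Set α, #B < κ → ∀ C : ℝ, ∃ x : α, x ∉ B ∧ C < |f x|

theorem isUnboundedOffSmall_of_le_mk_preimage {α : Type u} {κ : Cardinal.{u}} {c : α → ℕ}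
    (h : ∀ n, κ ≤ #(c ⁻¹' {n})) : IsUnboundedOffSmall κ (fun x => (c x : ℝ)) := by
  intro B hB C
  obtain ⟨n, hn⟩ := exists_nat_gt C
  obtain ⟨x, hxn, hxB⟩ : (c ⁻¹' {n} \ B).Nonempty :=
    sdiff_nonempty.2 fun hsub => ((h n).trans (mk_le_mk_of_subset hsub)).not_gt hB
  refine ⟨x, hxB, ?_⟩
  rw [mem_preimage, mem_singleton_iff] at hxn
  simpa [hxn] using hn

theorem isUnboundedOffSmall_aleph0_of_tendsto {α : Type u} [Infinite α] {f : α → ℝ}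
    (hf : Tendsto f cofinite atTop) : IsUnboundedOffSmall ℵ₀ f := by
  intro B hB C
  have hB : B.Finite := lt_aleph0_iff_set_finite.1 hB
  obtain ⟨x, hxB, hx⟩ := (hB.eventually_cofinite_notMem.and (hf.eventually_gt_atTop C)).exists
  exact ⟨x, hxB, hx.trans_le (le_abs_self _)⟩

theorem le_mk_range_of_mk_preimage_lt {α β : Type u} {κ : Cardinal.{u}} (hκ : κ.IsRegular)
    (hα : κ ≤ #α) {r : α → β} (hr : ∀ b, #(r ⁻¹' {b}) < κ) : κ ≤ #(range r) := by
  by_contra! hlt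
  have hsum : #α = sum fun b : range r => #(r ⁻¹' {b.1}) := by
    rw [← mk_sigma]
    exact mk_congr ((Equiv.sigmaFiberEquiv (rangeFactorization r)).symm.trans
      (Equiv.sigmaCongrRight fun b => Equiv.subtypeEquivRight fun x => by
        simp [rangeFactorization, Subtype.ext_iff]))
  exact (sum_lt_of_isRegular hκ hlt fun b => hr b.1).not_ge (hsum ▸ hα)

theorem exists_nat_le_mk_preimage (α : Type u) [Infinite α] :
    ∃ c : α → ℕ, ∀ n, #α ≤ #(c ⁻¹' {n}) := by
  obtain ⟨e⟩ : Nonempty (α ≃ α × ℕ) := by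
    refine Cardinal.eq.1 ?_
    simp [mul_aleph0_eq (aleph0_le_mk α)]
  refine ⟨fun a => (e a).2, fun n => mk_le_of_injective (f := fun a => ⟨e.symm (a, n), by simp⟩) ?_⟩
  intro a b hab
  simpa using congrArg Subtype.val hab

theorem exists_subset_Iio_of_mk_lt {κ : Cardinal.{u}} (hκ : κ.IsRegular) {s : Set κ.ord.ToType}
    (hs : #s < κ) : ∃ a, s ⊆ Iio a := by
  by_contra! h
  have hcof : IsCofinal s := fun a => by
    obtain ⟨b, hb, hab⟩ := not_subset.1 (h a)
    exact ⟨b, hb, not_lt.1 hab⟩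
  have := Order.cof_le hcof
  rw [Ordinal.cof_toType, hκ.cof_ord] at this
  exact this.not_gt hs

theorem Subgroup.mk_closure_lt {G : Type u} [Group G] {s : Set G} {κ : Cardinal.{u}}
    (hκ : ℵ₀ < κ) (hs : #s < κ) : #(Subgroup.closure s) < κ := by
  classical
  calc #(Subgroup.closure s) ≤ #(FreeGroup s) := by
        rw [FreeGroup.closure_eq_range]
        exact mk_le_of_surjective (MonoidHom.rangeRestrict_surjective _)
    _ ≤ #(List (s × Bool)) := mk_le_of_injective FreeGroup.toWord_injective
    _ ≤ max ℵ₀ #(s × Bool) := mk_list_le_max _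
    _ < κ := max_lt hκ <| by
        simpa using mul_lt_of_lt hκ.le hs (ofNat_lt_aleph0.trans hκ)

section Filtration

variable {G : Type u} [Group G] {ι : Type u} [LinearOrder ι] {H : ι → Subgroup G}

theorem Monotone.mul_mem_iff_of_mem_of_notMem (hH : Monotone H) {i j : ι} {g x : G}
    (hg : g ∈ H i) (hx : x ∉ H i) : g * x ∈ H j ↔ x ∈ H j := by
  rcases le_total i j with hij | hji
  · exact (H j).mul_mem_cancel_left (hH hij hg)
  · refine iff_of_false (fun hgx => hx ?_) (fun hxj => hx (hH hji hxj))
    simpa using (H i).mul_mem (inv_mem hg) (hH hji hgx)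

theorem exists_isSlowlyOscillating_of_monotone_subgroups {κ : Cardinal.{u}} (hκ : κ.IsRegular)
    (hG : κ ≤ #G) (hH : Monotone H) (hsmall : ∀ i, #(H i) < κ)
    (hbound : ∀ F : Set G, #F < κ → ∃ i, F ⊆ H i) :
    ∃ f : G → ℝ, IsSlowlyOscillating κ f ∧ IsUnboundedOffSmall κ f := by
  let p : G → Set ι := fun x => {j | x ∈ H j}
  have hp : ∀ S, #(p ⁻¹' {S}) < κ := by
    intro S
    rcases (p ⁻¹' {S}).eq_empty_or_nonempty with hS | ⟨x₀, hx₀⟩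
    · simpa [hS] using hκ.pos
    obtain ⟨i, hi⟩ := hbound {x₀} (by simpa using one_lt_aleph0.trans_le hκ.aleph0_le)
    refine (mk_le_mk_of_subset fun x hx => ?_).trans_lt (hsmall i)
    have hpx : p x = p x₀ := hx.trans hx₀.symm
    exact (Set.ext_iff.1 hpx i).2 (hi rfl)
  have hrange : κ ≤ #(range p) := le_mk_range_of_mk_preimage_lt hκ hG hp
  have : Infinite (range p) := infinite_iff.2 (hκ.aleph0_le.trans hrange)
  obtain ⟨c, hc⟩ := exists_nat_le_mk_preimage (range p)
  refine ⟨fun x => (c (rangeFactorization p x) : ℝ), ?_, ?_⟩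
  · refine IsSlowlyOscillating.of_forall_mul fun F hF ε hε => ?_
    obtain ⟨i, hi⟩ := hbound F hF
    refine ⟨H i, hsmall i, fun x hx g hg => ?_⟩
    have hpgx : p (g * x) = p x := Set.ext fun j => hH.mul_mem_iff_of_mem_of_notMem (hi hg) hx
    simp [rangeFactorization, hpgx, hε]
  · refine isUnboundedOffSmall_of_le_mk_preimage fun n => hrange.trans ((hc n).trans ?_)
    exact mk_preimage_of_subset_range _ _ (by simp [rangeFactorization_surjective.range_eq])

theorem exists_monotone_subgroups_of_isRegular {κ : Cardinal.{u}} (hκ : κ.IsRegular)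
    (hκ₀ : ℵ₀ < κ) (hG : #G = κ) :
    ∃ H : κ.ord.ToType → Subgroup G,
      Monotone H ∧ (∀ i, #(H i) < κ) ∧ ∀ F : Set G, #F < κ → ∃ i, F ⊆ H i := by
  obtain ⟨e⟩ : Nonempty (G ≃ κ.ord.ToType) := Cardinal.eq.1 (by simp [hG])
  refine ⟨fun i => Subgroup.closure (e ⁻¹' Iio i),
    fun i j hij => Subgroup.closure_mono (preimage_mono (Iio_subset_Iio hij)),
    fun i => Subgroup.mk_closure_lt hκ₀ ?_, fun F hF => ?_⟩
  · rw [mk_preimage_equiv]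
    simpa using mk_Iio_lt i (by simp)
  · obtain ⟨a, ha⟩ := exists_subset_Iio_of_mk_lt hκ (s := e '' F) (mk_image_le.trans_lt hF)
    exact ⟨a, fun x hx => Subgroup.subset_closure (ha (mem_image_of_mem e hx))⟩

end Filtration

section Countable

variable {G : Type u} [Group G]

theorem IsSlowlyOscillating.of_eventually_aleph0 {f : G → ℝ}
    (h : ∀ g, ∀ ε : ℝ, 0 < ε → ∀ᶠ x in cofinite, |f (g * x) - f x| < ε) :
    IsSlowlyOscillating ℵ₀ f := by
  refine IsSlowlyOscillating.of_forall_mul fun F hF ε hε => ?_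
  have hF : F.Finite := lt_aleph0_iff_set_finite.1 hF
  have hB := eventually_cofinite.1 (hF.eventually_all.2 fun g _ => h g ε hε)
  exact ⟨_, lt_aleph0_iff_set_finite.2 hB, fun x hx => not_not.1 hx⟩

theorem exists_wordLength [Countable G] :
    ∃ ℓ : G → ℕ, Tendsto ℓ cofinite atTop ∧ ∀ g, ∀ᶠ x in cofinite, ℓ (g * x) ≤ ℓ x + 1 := by
  classical
  obtain ⟨e, he⟩ := exists_surjective_nat G
  let S : ℕ → Finset G := fun n => insert 1 ((Finset.range n).image e)
  have hS1 : ∀ n, 1 ∈ S n := fun n => Finset.mem_insert_self _ _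
  have hSe : ∀ {k n}, k < n → e k ∈ S n := fun hkn =>
    Finset.mem_insert_of_mem (Finset.mem_image_of_mem e (Finset.mem_range.2 hkn))
  have hS : Monotone S := fun m n hmn =>
    Finset.insert_subset_insert _ (Finset.image_subset_image (Finset.range_subset_range.2 hmn))
  have hP : Monotone fun n => S n ^ n := fun m n hmn => Finset.pow_subset_pow (hS hmn) (hS1 n) hmn
  have hex : ∀ x, ∃ n, x ∈ S n ^ n := fun x => by
    obtain ⟨k, rfl⟩ := he x
    exact ⟨k + 1, Finset.subset_pow (hS1 _) k.succ_ne_zero (hSe k.lt_succ_self)⟩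
  let ℓ : G → ℕ := fun x => Nat.find (hex x)
  have hℓ : ∀ x, x ∈ S (ℓ x) ^ ℓ x := fun x => Nat.find_spec (hex x)
  have htend : Tendsto ℓ cofinite atTop := by
    refine tendsto_atTop.2 fun n => eventually_cofinite.2 ?_
    exact (S n ^ n).finite_toSet.subset fun x hx => hP (not_le.1 hx).le (hℓ x)
  refine ⟨ℓ, htend, fun g => ?_⟩
  obtain ⟨k, rfl⟩ := he g
  filter_upwards [htend.eventually_gt_atTop k] with x hx
  have hgx : e k * x ∈ S (ℓ x) ^ (ℓ x + 1) := by
    rw [pow_succ']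
    exact Finset.mul_mem_mul (hSe hx) (hℓ x)
  exact Nat.find_le (Finset.pow_subset_pow_left (hS (ℓ x).le_succ) hgx)

theorem isSlowlyOscillating_aleph0_comp {ℓ : G → ℕ} (hℓ : Tendsto ℓ cofinite atTop)
    (hstep : ∀ g, ∀ᶠ x in cofinite, ℓ (g * x) ≤ ℓ x + 1) {φ : ℕ → ℝ}
    (hφ : Tendsto (fun n => φ (n + 1) - φ n) atTop (𝓝 0)) : IsSlowlyOscillating ℵ₀ (φ ∘ ℓ) := by
  refine IsSlowlyOscillating.of_eventually_aleph0 fun g ε hε => ?_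
  have hsmall : ∀ᶠ n in atTop, |φ (n + 1) - φ n| < ε := by
    simpa [Real.dist_eq] using hφ.eventually (Metric.ball_mem_nhds 0 hε)
  have hg : Tendsto (g * ·) cofinite cofinite := (mul_right_injective g).tendsto_cofinite
  have hback : ∀ᶠ x in cofinite, ℓ x ≤ ℓ (g * x) + 1 := by
    simpa using hg.eventually (hstep g⁻¹)
  filter_upwards [hstep g, hback, hℓ.eventually hsmall, (hℓ.comp hg).eventually hsmall]
    with x hup hdown hx hgx
  simp only [Function.comp_apply] at hgx ⊢
  rcases (by omega : ℓ (g * x) = ℓ x + 1 ∨ ℓ (g * x) = ℓ x ∨ ℓ x = ℓ (g * x) + 1) with h | h | h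
  · rwa [h]
  · simpa [h] using hε
  · rwa [h, abs_sub_comm]

theorem tendsto_harmonic_atTop : Tendsto (fun n => (harmonic n : ℝ)) atTop atTop :=
  tendsto_atTop_mono log_add_one_le_harmonic <|
    Real.tendsto_log_atTop.comp <| tendsto_natCast_atTop_atTop.comp (tendsto_add_atTop_nat 1)

theorem tendsto_harmonic_succ_sub_harmonic :
    Tendsto (fun n => (harmonic (n + 1) : ℝ) - harmonic n) atTop (𝓝 0) := by
  simpa [harmonic_succ] using tendsto_one_div_add_atTop_nhds_zero_nat (𝕜 := ℝ)

theorem exists_isSlowlyOscillating_aleph0 [Countable G] [Infinite G] :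
    ∃ f : G → ℝ, IsSlowlyOscillating ℵ₀ f ∧ IsUnboundedOffSmall ℵ₀ f := by
  obtain ⟨ℓ, hℓ, hstep⟩ := exists_wordLength (G := G)
  exact ⟨_, isSlowlyOscillating_aleph0_comp hℓ hstep tendsto_harmonic_succ_sub_harmonic,
    isUnboundedOffSmall_aleph0_of_tendsto (tendsto_harmonic_atTop.comp hℓ)⟩

end Countable

/-- For an infinite regular cardinal `κ` and a group `G` of cardinality `κ`,
the `κ`-ballean of `G` is not so-bounded: there is a slowly oscillating
`f : G → ℝ` which is unbounded on `G ∖ B` for every `B` of cardinality `< κ`. -/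
theorem kappa_ballean_not_soBounded {G : Type u} [Group G] (κ : Cardinal.{u})
    (hreg : κ.IsRegular) (hG : Cardinal.mk G = κ) :
    ∃ f : G → ℝ,
      (∀ F : Set G, Cardinal.mk F < κ → ∀ ε : ℝ, 0 < ε →
        ∃ B : Set G, Cardinal.mk B < κ ∧
          ∀ x ∉ B, ∀ a ∈ grpBall F x, ∀ b ∈ grpBall F x, |f a - f b| < ε) ∧
      (∀ B : Set G, Cardinal.mk B < κ → ∀ C : ℝ, ∃ x : G, x ∉ B ∧ C < |f x|) := by
  suffices ∃ f : G → ℝ, IsSlowlyOscillating κ f ∧ IsUnboundedOffSmall κ f from this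
  rcases hreg.aleph0_le.eq_or_lt with rfl | hκ
  · have : Countable G := mk_le_aleph0_iff.1 hG.le
    have : Infinite G := infinite_iff.2 hG.ge
    exact exists_isSlowlyOscillating_aleph0
  · obtain ⟨H, hH, hsmall, hbound⟩ := exists_monotone_subgroups_of_isRegular hreg hκ hG
    exact exists_isSlowlyOscillating_of_monotone_subgroups hreg hG.ge hH hsmall hbound
end

section
/- Let κ be an infinite cardinal and X a set of cardinality |X| ≥ κ. Then the κ-ballean of the free group G = F(X) on X is not so-bounded: there exists a function f : G → ℝ that is slowly oscillating with respect to the κ-ballean but, for every B ⊆ G with |B| < κ, f is unbounded on G∖B. -/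
/-!
Let `φ : X → ℕ` take every value on `κ` generators and let `f w` be `φ` of the last letter of the
reduced word `w`. The elements `g` for which `g * x` and `x` end in the same letter for all but
finitely many `x` form a subgroup, and it contains every generator `of t`: the last letter of `x`
survives in `of t * x` unless `x ∈ {1, (of t)⁻¹}`. Hence for `|F| < κ` the function `f` is constant
on every ball `E_F[x]` with `x` outside a union of fewer than `κ` finite sets. On the other hand
each level set `f = n` contains `κ` generators, so no set of size `< κ` covers it.
-/

universe u

open Cardinal

section LeftDisplacement

variable {G α : Type*} [Group G] (p : G → α)

def leftDisplacement (g : G) : Set G := {x | p (g * x) ≠ p x}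

def finiteDisplacementSubgroup : Subgroup G where
  carrier := {g | (leftDisplacement p g).Finite}
  one_mem' := by simp [leftDisplacement]
  mul_mem' {g h} hg hh := by
    refine (hh.union (hg.preimage (mul_right_injective h).injOn)).subset fun x hx => ?_
    by_contra! hxh
    simp only [Set.mem_union, Set.mem_preimage, leftDisplacement, Set.mem_ofPred_eq, not_or,
      not_not] at hxh
    exact hx (by rw [mul_assoc, hxh.2, hxh.1])
  inv_mem' {g} hg := by
    refine (hg.image (g * ·)).subset fun x hx => ⟨g⁻¹ * x, fun h => hx ?_, mul_inv_cancel_left g x⟩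
    rw [mul_inv_cancel_left] at h
    exact h.symm

end LeftDisplacement

theorem Cardinal.mk_iUnion_lt_of_finite {α ι : Type u} {κ : Cardinal} (hκ : ℵ₀ ≤ κ)
    (s : ι → Set α) (hι : #ι < κ) (hs : ∀ i, (s i).Finite) : #(⋃ i, s i) < κ := by
  rcases hκ.eq_or_lt with rfl | hκ'
  · have : Finite ι := lt_aleph0_iff_finite.1 hι
    exact (Set.finite_iUnion hs).lt_aleph0
  · refine (mk_iUnion_le s).trans_lt (mul_lt_of_lt hκ hι ?_)
    exact (ciSup_le' fun i => (hs i).lt_aleph0.le).trans_lt hκ'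

theorem Cardinal.exists_fun_nat_forall_le_mk_preimage {X : Type u} {κ : Cardinal.{u}}
    (hκ : ℵ₀ ≤ κ) (hX : κ ≤ #X) : ∃ φ : X → ℕ, ∀ n, κ ≤ #(φ ⁻¹' {n}) := by
  have hprod : #(ULift.{u} ℕ × κ.out) = κ := by
    simp [mk_prod, mk_out, aleph0_mul_eq hκ]
  obtain ⟨e⟩ : Nonempty (ULift.{u} ℕ × κ.out ↪ X) := le_def _ _ |>.1 (hprod.trans_le hX)
  refine ⟨Function.extend e (fun p => p.1.down) 0, fun n => ?_⟩
  refine (mk_out κ).symm.trans_le <|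
    mk_le_of_injective (f := fun t => ⟨e (⟨n⟩, t), ?_⟩) fun t t' h => ?_
  · simp [e.injective.extend_apply]
  · simpa using e.injective (Subtype.ext_iff.1 h)

namespace FreeGroup

variable {X : Type*} [DecidableEq X]

theorem getLast?_toWord_of_mul {t : X} {x : FreeGroup X} (h1 : x ≠ 1) (hinv : x ≠ (of t)⁻¹) :
    (of t * x).toWord.getLast? = x.toWord.getLast? := by
  rw [toWord_mul, toWord_of, List.singleton_append, reduce.cons, reduce_toWord]
  rcases hx : x.toWord with _ | ⟨⟨s, b⟩, _ | ⟨l', w⟩⟩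
  · exact absurd (toWord_eq_nil_iff.mp hx) h1
  · dsimp only
    split_ifs with hcancel
    · refine absurd (toWord_injective ?_) hinv
      obtain ⟨rfl, hb⟩ := hcancel
      obtain rfl : b = false := by simpa using hb.symm
      simp [hx, invRev]
    · exact List.getLast?_cons_cons ..
  · dsimp only
    split_ifs
    · exact (List.getLast?_cons_cons ..).symm
    · simp only [List.getLast?_cons_cons]

theorem finite_leftDisplacement_getLast?_toWord (g : FreeGroup X) :
    (leftDisplacement (fun x : FreeGroup X => x.toWord.getLast?) g).Finite := by
  suffices Subgroup.closure (Set.range of) ≤ finiteDisplacementSubgroup fun x : FreeGroup X =>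
      x.toWord.getLast? from this (closure_range_of X ▸ Subgroup.mem_top g)
  rw [Subgroup.closure_le]
  rintro _ ⟨t, rfl⟩
  refine ((Set.finite_singleton (of t)⁻¹).insert 1).subset fun x hx => ?_
  by_contra! hx'
  simp only [Set.mem_insert_iff, Set.mem_singleton_iff, not_or] at hx'
  exact hx (getLast?_toWord_of_mul hx'.1 hx'.2)

end FreeGroup

/-- For an infinite cardinal `κ` and a set `X` of cardinality `≥ κ`, the
`κ`-ballean of the free group `F(X)` is not so-bounded: there is a slowly
oscillating `f : F(X) → ℝ` which is unbounded on the complement of every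
set of cardinality `< κ`. -/
theorem kappa_ballean_freeGroup_not_soBounded {X : Type u} (κ : Cardinal.{u})
    (hκ : Cardinal.aleph0 ≤ κ) (hX : κ ≤ Cardinal.mk X) :
    ∃ f : FreeGroup X → ℝ,
      (∀ F : Set (FreeGroup X), Cardinal.mk F < κ → ∀ ε : ℝ, 0 < ε →
        ∃ B : Set (FreeGroup X), Cardinal.mk B < κ ∧
          ∀ x ∉ B, ∀ a ∈ grpBall F x, ∀ b ∈ grpBall F x, |f a - f b| < ε) ∧
      (∀ B : Set (FreeGroup X), Cardinal.mk B < κ →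
        ∀ C : ℝ, ∃ x : FreeGroup X, x ∉ B ∧ C < |f x|) := by
  classical
  obtain ⟨φ, hφ⟩ := exists_fun_nat_forall_le_mk_preimage hκ hX
  let lastLetter (w : FreeGroup X) : Option (X × Bool) := w.toWord.getLast?
  let f (w : FreeGroup X) : ℝ := (lastLetter w).elim 0 fun l => φ l.1
  refine ⟨f, fun F hF ε hε => ?_, fun B hB C => ?_⟩
  · refine ⟨⋃ g : F, leftDisplacement lastLetter g, mk_iUnion_lt_of_finite hκ _ hF
      fun g => FreeGroup.finite_leftDisplacement_getLast?_toWord (g : FreeGroup X), fun x hx => ?_⟩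
    have hball : ∀ a ∈ grpBall F x, f a = f x := by
      rintro _ (rfl | ⟨g, hg, rfl⟩)
      · rfl
      · have : lastLetter (g * x) = lastLetter x :=
          not_not.1 fun h => hx (Set.mem_iUnion.2 ⟨⟨g, hg⟩, h⟩)
        simp only [f, this]
    intro a ha b hb
    rwa [hball a ha, hball b hb, sub_self, abs_zero]
  · obtain ⟨n, hn⟩ := exists_nat_gt C
    obtain ⟨t, htn, htB⟩ : ∃ t ∈ φ ⁻¹' {n}, FreeGroup.of t ∉ B := by
      by_contra! h
      refine (hφ n).not_gt (lt_of_le_of_lt ?_ hB)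
      rw [← mk_image_eq FreeGroup.of_injective]
      exact mk_le_mk_of_subset (Set.image_subset_iff.2 h)
    refine ⟨FreeGroup.of t, htB, ?_⟩
    rw [Set.mem_preimage, Set.mem_singleton_iff] at htn
    simpa [f, lastLetter, htn] using hn
end

section
/- Let κ be a cardinal of uncountable cofinality and G a group of cardinality |G| > κ such that every subset of G of cardinality ≤ κ is contained in a normal subgroup of G of cardinality ≤ κ (G is κ⁺-normal). Then the κ-ballean of G is emu-bounded: for every function f : G → ℝ that is eventually macro-uniform with respect to the κ-ballean, there exists B ⊆ G with |B| < κ such that f is bounded on G∖B. -/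
universe u

/-- Let `κ` be a cardinal of uncountable cofinality and `G` a `κ⁺`-normal group of
cardinality `> κ` (every subset of cardinality `≤ κ` lies in a normal subgroup of
cardinality `≤ κ`). Then the `κ`-ballean of `G` is emu-bounded: every eventually
macro-uniform `f : G → ℝ` is bounded outside a set of cardinality `< κ`. -/
theorem kappa_ballean_emuBounded_of_succ_normal {G : Type u} [Group G] (κ : Cardinal.{u})
    (hcof : Cardinal.aleph0 < κ.ord.cof)
    (hcard : κ < Cardinal.mk G)
    (hnormal : ∀ S : Set G, Cardinal.mk S ≤ κ →
      ∃ H : Subgroup G, H.Normal ∧ Cardinal.mk H ≤ κ ∧ S ⊆ (H : Set G))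
    (f : G → ℝ)
    (hf : ∀ F : Set G, Cardinal.mk F < κ →
      ∃ B : Set G, Cardinal.mk B < κ ∧ ∃ C : ℝ,
        ∀ x ∉ B, ∀ a ∈ grpBall F x, ∀ b ∈ grpBall F x, |f a - f b| ≤ C) :
    ∃ B : Set G, Cardinal.mk B < κ ∧ ∃ C : ℝ, ∀ x ∉ B, |f x| ≤ C := by
  by_contra hgoal
  push_neg at hgoal
  -- hgoal : ∀ B, #B < κ → ∀ C, ∃ x, x ∉ B ∧ C < |f x|
  have hκ0 : Cardinal.aleph0 ≤ κ := le_trans hcof.le (Ordinal.cof_ord_le κ)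
  have hκ0' : Cardinal.aleph0 < κ := lt_of_lt_of_le hcof (Ordinal.cof_ord_le κ)
  -- Step 1 : every "large value" set has cardinality ≥ κ
  have step1 : ∀ r : ℝ, κ ≤ Cardinal.mk {x : G | r ≤ |f x|} := by
    intro r
    by_contra hA
    push_neg at hA
    obtain ⟨x, hx, hx2⟩ := hgoal _ hA r
    exact hx (le_of_lt hx2)
  -- Step 2 : some "small value" set has cardinality > κ
  have step2 : ∃ m : ℕ, κ < Cardinal.mk {x : G | |f x| ≤ (m : ℝ)} := by
    by_contra hL
    push_neg at hL
    have hcover : (Set.univ : Set G) ⊆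
        ⋃ m : ULift.{u} ℕ, {x : G | |f x| ≤ ((m.down : ℕ) : ℝ)} := by
      intro x _
      obtain ⟨m, hm⟩ := exists_nat_ge |f x|
      exact Set.mem_iUnion.mpr ⟨ULift.up m, hm⟩
    have h1 : Cardinal.mk G ≤
        Cardinal.mk (⋃ m : ULift.{u} ℕ, {x : G | |f x| ≤ ((m.down : ℕ) : ℝ)}) := by
      calc Cardinal.mk G = Cardinal.mk (Set.univ : Set G) := Cardinal.mk_univ.symm
        _ ≤ _ := Cardinal.mk_le_mk_of_subset hcover
    have h2 : Cardinal.mk (⋃ m : ULift.{u} ℕ, {x : G | |f x| ≤ ((m.down : ℕ) : ℝ)}) ≤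
        Cardinal.aleph0 * κ := by
      refine le_trans (Cardinal.mk_iUnion_le _) ?_
      refine mul_le_mul' ?_ ?_
      · simp
      · exact ciSup_le fun m => hL m.down
    have h3 : Cardinal.aleph0 * κ ≤ κ := by
      calc Cardinal.aleph0 * κ ≤ κ * κ := mul_le_mul' hκ0 le_rfl
        _ = κ := Cardinal.mul_eq_self hκ0
    exact absurd (lt_of_lt_of_le hcard (le_trans h1 (le_trans h2 h3))) (lt_irrefl κ)
  obtain ⟨m₀, hm₀⟩ := step2
  -- Step 3 : for every r there is a single g with κ-many points of "defect" ≥ r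
  have step3 : ∀ r : ℝ, ∃ g : G, κ ≤ Cardinal.mk {x : G | r ≤ |f (g * x) - f x|} := by
    intro r
    by_contra hcon
    push_neg at hcon
    -- hcon : ∀ g, #{x | r ≤ |f (g*x) - f x|} < κ
    set n : ℝ := r + r + (m₀ : ℝ) + 1 with hn
    obtain ⟨T, hTsub, hTcard⟩ := Cardinal.le_mk_iff_exists_subset.mp (step1 n)
    obtain ⟨H, hHnorm, hHcard, hTH⟩ := hnormal T (le_of_eq hTcard)
    have hchoice : ∀ ℓ : G, ∃ t : G, t ∈ T ∧ ¬ (r ≤ |f (ℓ * t) - f t|) := by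
      intro ℓ
      have hns : ¬ T ⊆ {x : G | r ≤ |f (ℓ * x) - f x|} := by
        intro hsub
        have hle := Cardinal.mk_le_mk_of_subset hsub
        rw [hTcard] at hle
        exact absurd (lt_of_le_of_lt hle (hcon ℓ)) (lt_irrefl κ)
      obtain ⟨t, ht, ht2⟩ := Set.not_subset.mp hns
      exact ⟨t, ht, ht2⟩
    choose t htT htW using hchoice
    set L : Set G := {x : G | |f x| ≤ (m₀ : ℝ)} with hLdef
    have hLcover : L ⊆ ⋃ h : H, {ℓ : G | ℓ ∈ L ∧ ℓ * t ℓ * ℓ⁻¹ = (h : G)} := by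
      intro ℓ hℓ
      have hmem : ℓ * t ℓ * ℓ⁻¹ ∈ H := hHnorm.conj_mem _ (hTH (htT ℓ)) ℓ
      exact Set.mem_iUnion.mpr ⟨⟨_, hmem⟩, hℓ, rfl⟩
    have hfiber : ∃ h : H, κ ≤ Cardinal.mk {ℓ : G | ℓ ∈ L ∧ ℓ * t ℓ * ℓ⁻¹ = (h : G)} := by
      by_contra hfc
      push_neg at hfc
      have h1 : Cardinal.mk L ≤ Cardinal.mk H * κ := by
        refine le_trans (Cardinal.mk_le_mk_of_subset hLcover) ?_
        refine le_trans (Cardinal.mk_iUnion_le _) (mul_le_mul' le_rfl ?_)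
        exact ciSup_le fun h => (hfc h).le
      have h2 : Cardinal.mk H * κ ≤ κ := by
        calc Cardinal.mk H * κ ≤ κ * κ := mul_le_mul' hHcard le_rfl
          _ = κ := Cardinal.mul_eq_self hκ0
      exact absurd (lt_of_lt_of_le hm₀ (le_trans h1 h2)) (lt_irrefl κ)
    obtain ⟨h₀, hh₀⟩ := hfiber
    have hsub : {ℓ : G | ℓ ∈ L ∧ ℓ * t ℓ * ℓ⁻¹ = (h₀ : G)} ⊆
        {x : G | r ≤ |f ((h₀ : G) * x) - f x|} := by
      rintro ℓ ⟨hℓL, hℓc⟩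
      have e1 : (h₀ : G) * ℓ = ℓ * t ℓ := by
        rw [← hℓc]; group
      have h1 : |f (ℓ * t ℓ) - f (t ℓ)| < r := lt_of_not_ge (htW ℓ)
      have h2 : n ≤ |f (t ℓ)| := hTsub (htT ℓ)
      have h3 : |f ℓ| ≤ (m₀ : ℝ) := hℓL
      have h4 : |f (t ℓ)| - |f (ℓ * t ℓ)| ≤ |f (ℓ * t ℓ) - f (t ℓ)| := by
        calc |f (t ℓ)| - |f (ℓ * t ℓ)| ≤ |f (t ℓ) - f (ℓ * t ℓ)| :=
              abs_sub_abs_le_abs_sub _ _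
          _ = |f (ℓ * t ℓ) - f (t ℓ)| := abs_sub_comm _ _
      have h5 : |f (ℓ * t ℓ)| - |f ℓ| ≤ |f (ℓ * t ℓ) - f ℓ| := abs_sub_abs_le_abs_sub _ _
      show r ≤ |f ((h₀ : G) * ℓ) - f ℓ|
      rw [e1]
      linarith
    exact absurd (lt_of_le_of_lt
      (le_trans hh₀ (Cardinal.mk_le_mk_of_subset hsub)) (hcon ((h₀ : G)))) (lt_irrefl κ)
  -- Step 4 : assemble and contradict `hf`
  choose g hg using step3
  have hFc : (Set.range fun k : ℕ => g (k : ℝ)).Countable := Set.countable_range _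
  have hFcard : Cardinal.mk (Set.range fun k : ℕ => g (k : ℝ)) < κ := by
    refine lt_of_le_of_lt ?_ hκ0'
    have := hFc.to_subtype
    exact Cardinal.mk_le_aleph0
  obtain ⟨B, hB, C, hC⟩ := hf _ hFcard
  obtain ⟨k, hk⟩ := exists_nat_gt C
  have hWk : κ ≤ Cardinal.mk {x : G | (k : ℝ) ≤ |f (g (k : ℝ) * x) - f x|} := hg (k : ℝ)
  have hnsub : ¬ {x : G | (k : ℝ) ≤ |f (g (k : ℝ) * x) - f x|} ⊆ B := by
    intro hsub
    exact absurd (lt_of_le_of_lt (le_trans hWk (Cardinal.mk_le_mk_of_subset hsub)) hB)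
      (lt_irrefl κ)
  obtain ⟨x, hxW, hxB⟩ := Set.not_subset.mp hnsub
  have ha : g (k : ℝ) * x ∈ grpBall (Set.range fun k : ℕ => g (k : ℝ)) x :=
    Set.mem_insert_iff.mpr (Or.inr ⟨g (k : ℝ), ⟨k, rfl⟩, rfl⟩)
  have hb : x ∈ grpBall (Set.range fun k : ℕ => g (k : ℝ)) x := Set.mem_insert _ _
  have hball := hC x hxB _ ha _ hb
  have hxW' : (k : ℝ) ≤ |f (g (k : ℝ) * x) - f x| := hxW
  linarith
end

section
/- Let κ be a singular cardinal (an infinite cardinal with cf(κ) < κ) and G a group of cardinality |G| = κ such that every subset of G of cardinality < κ is contained in a normal subgroup of G of cardinality < κ (G is κ-normal). Then the κ-ballean of G is emu-bounded: for every function f : G → ℝ that is eventually macro-uniform with respect to the κ-ballean, there exists B ⊆ G with |B| < κ such that f is bounded on G∖B. -/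
universe u

/-- Let `κ` be a singular cardinal and `G` a `κ`-normal group of cardinality `κ`
(every subset of cardinality `< κ` lies in a normal subgroup of cardinality `< κ`).
Then the `κ`-ballean of `G` is emu-bounded: every eventually macro-uniform
`f : G → ℝ` is bounded outside a set of cardinality `< κ`. -/
theorem kappa_ballean_emuBounded_of_singular {G : Type u} [Group G] (κ : Cardinal.{u})
    (hinf : Cardinal.aleph0 ≤ κ) (hsing : κ.ord.cof < κ)
    (hcard : Cardinal.mk G = κ)
    (hnormal : ∀ S : Set G, Cardinal.mk S < κ →
      ∃ H : Subgroup G, H.Normal ∧ Cardinal.mk H < κ ∧ S ⊆ (H : Set G))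
    (f : G → ℝ)
    (hf : ∀ F : Set G, Cardinal.mk F < κ →
      ∃ B : Set G, Cardinal.mk B < κ ∧ ∃ C : ℝ,
        ∀ x ∉ B, ∀ a ∈ grpBall F x, ∀ b ∈ grpBall F x, |f a - f b| ≤ C) :
    ∃ B : Set G, Cardinal.mk B < κ ∧ ∃ C : ℝ, ∀ x ∉ B, |f x| ≤ C := by
  by_contra hcon
  push_neg at hcon
  -- `f` is unbounded outside every small set, so every superlevel set is not small
  have hU : ∀ C : ℝ, ¬ (Cardinal.mk {x : G | C < |f x|} < κ) := by
    intro C hC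
    obtain ⟨x, hx, hx2⟩ := hcon _ hC C
    exact hx hx2
  -- a non-small set cannot be covered by a small set
  have hAvoid : ∀ W B : Set G, ¬ (Cardinal.mk W < κ) → Cardinal.mk B < κ →
      ∃ x, x ∈ W ∧ x ∉ B := by
    intro W B hW hB
    by_contra hc
    push_neg at hc
    exact hW (lt_of_le_of_lt (Cardinal.mk_le_mk_of_subset hc) hB)
  -- Key lemma: for every `r` and `μ < κ` there is `g` with
  -- `|f (g x) - f x| > r` for at least `μ` many `x`.
  have key : ∀ (r : ℝ) (μ : Cardinal.{u}), μ < κ →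
      ∃ g : G, μ ≤ Cardinal.mk {x : G | r < |f (g * x) - f x|} := by
    intro r μ hμ
    obtain ⟨S, hS⟩ := Cardinal.le_mk_iff_exists_set.mp (le_of_lt (hcard ▸ hμ))
    obtain ⟨H, hHn, hHκ, hSH⟩ := hnormal S (by rw [hS]; exact hμ)
    obtain ⟨B, hB, C, hC⟩ := hf (H : Set G) hHκ
    set C' : ℝ := max C 0 with hC'def
    have hC'0 : (0:ℝ) ≤ C' := le_max_right _ _
    -- the set of points whose whole `H`-coset lies in `B`
    set Bad : Set G := {x | ∀ h ∈ H, h * x ∈ B} with hBadDef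
    have hBadB : Bad ⊆ B := by
      intro x hx
      have := hx 1 H.one_mem
      simpa using this
    have hBadκ : Cardinal.mk Bad < κ :=
      lt_of_le_of_lt (Cardinal.mk_le_mk_of_subset hBadB) hB
    -- outside `Bad`, `f` varies at most `C'` on each `H`-coset
    have hdiam : ∀ x ∉ Bad, ∀ h₁ ∈ H, ∀ h₂ ∈ H, |f (h₁ * x) - f (h₂ * x)| ≤ C' := by
      intro x hx h₁ hh₁ h₂ hh₂
      have hx' : ∃ h ∈ H, h * x ∉ B := by
        by_contra hcc
        push_neg at hcc
        exact hx hcc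
      obtain ⟨h₀, hh₀, hyB⟩ := hx'
      have mem : ∀ h ∈ H, h * x ∈ grpBall (H : Set G) (h₀ * x) := by
        intro h hh
        refine Set.mem_insert_of_mem _ ⟨h * h₀⁻¹, ?_, by group⟩
        exact H.mul_mem hh (H.inv_mem hh₀)
      have := hC (h₀ * x) hyB _ (mem h₁ hh₁) _ (mem h₂ hh₂)
      exact this.trans (le_max_left _ _)
    -- pick a base point whose coset is good
    obtain ⟨x₁, -, hx₁⟩ := hAvoid Set.univ Bad
      (by rw [Cardinal.mk_univ, hcard]; exact lt_irrefl κ) hBadκ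
    -- pick a far-away point whose coset is good
    obtain ⟨x₂, hx₂f, hx₂⟩ := hAvoid {x : G | |f x₁| + r + 2*C' + 1 < |f x|} Bad
      (hU _) hBadκ
    refine ⟨x₂ * x₁⁻¹, ?_⟩
    have hsub : ∀ h ∈ H, r < |f (x₂ * x₁⁻¹ * (h * x₁)) - f (h * x₁)| := by
      intro h hh
      have hconj : x₂ * (x₁⁻¹ * h * x₁) * x₂⁻¹ ∈ H :=
        hHn.conj_mem _ (hHn.conj_mem' h hh x₁) x₂
      have h1 : |f (x₂ * x₁⁻¹ * (h * x₁)) - f x₂| ≤ C' := by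
        have := hdiam x₂ hx₂ _ hconj 1 H.one_mem
        have e : x₂ * (x₁⁻¹ * h * x₁) * x₂⁻¹ * x₂ = x₂ * x₁⁻¹ * (h * x₁) := by group
        rwa [e, one_mul] at this
      have h2 : |f (h * x₁) - f x₁| ≤ C' := by
        have := hdiam x₁ hx₁ h hh 1 H.one_mem
        rwa [one_mul] at this
      have hfar : |f x₁| + r + 2*C' + 1 < |f x₂| := hx₂f
      set A := f (x₂ * x₁⁻¹ * (h * x₁))
      set Bv := f (h * x₁)
      have t1 : |f x₂ - f x₁| ≤ |f x₂ - A| + (|A - Bv| + |Bv - f x₁|) :=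
        le_trans (abs_sub_le _ A _) (by
          have := abs_sub_le A Bv (f x₁)
          linarith)
      have t2 : |f x₂| - |f x₁| ≤ |f x₂ - f x₁| := abs_sub_abs_le_abs_sub _ _
      have t3 : |f x₂ - A| = |A - f x₂| := abs_sub_comm _ _
      linarith
    calc μ = Cardinal.mk S := hS.symm
      _ ≤ Cardinal.mk (H : Set G) := Cardinal.mk_le_mk_of_subset hSH
      _ ≤ Cardinal.mk {x : G | r < |f (x₂ * x₁⁻¹ * x) - f x|} := by
          refine Cardinal.mk_le_of_injective (f := fun a : (H : Set G) =>
            (⟨a.1 * x₁, hsub a.1 a.2⟩ :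
              {x : G | r < |f (x₂ * x₁⁻¹ * x) - f x|})) ?_
          intro a b hab
          exact Subtype.ext (mul_right_cancel (congrArg Subtype.val hab))
  -- `ℵ₀ < κ`
  have haleph : Cardinal.aleph0 < κ := by
    rcases lt_or_eq_of_le hinf with h | h
    · exact h
    · exfalso
      rw [← h] at hsing
      rw [Cardinal.isRegular_aleph0.cof_eq] at hsing
      exact lt_irrefl _ hsing
  -- a cofinal family of ordinals below `κ.ord` of size `cf κ`
  obtain ⟨ι, o, ho, hι⟩ := Ordinal.exists_lsub_cof κ.ord
  have hικ : Cardinal.mk ι < κ := by rw [hι]; exact hsing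
  have hchoice : ∀ (n : ℕ) (i : ι), ∃ g : G,
      (o i).card ≤ Cardinal.mk {x : G | (n:ℝ) < |f (g * x) - f x|} := by
    intro n i
    refine key (n:ℝ) (o i).card (Cardinal.lt_ord.mp ?_)
    rw [← ho]
    exact Ordinal.lt_lsub o i
  choose g hg using hchoice
  -- the small set `F` of all chosen elements
  set F : Set G := Set.range (fun p : ULift.{u} ℕ × ι => g p.1.down p.2) with hFdef
  have hF : Cardinal.mk F < κ := by
    refine lt_of_le_of_lt Cardinal.mk_range_le ?_
    have : Cardinal.mk (ULift.{u} ℕ × ι) = Cardinal.aleph0 * Cardinal.mk ι := by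
      simp [Cardinal.mk_prod]
    rw [this]
    exact Cardinal.mul_lt_of_lt hinf haleph hικ
  obtain ⟨B, hB, C, hC⟩ := hf F hF
  obtain ⟨n, hn⟩ := exists_nat_gt C
  -- `κ` is a limit cardinal, so `succ (mk B) < κ`
  have hsucc : Order.succ (Cardinal.mk B) < κ := by
    rcases lt_or_ge (Order.succ (Cardinal.mk B)) κ with h | h
    · exact h
    · exfalso
      have h1 : Order.succ (Cardinal.mk B) ≤ κ := Order.succ_le_of_lt hB
      have h2 : κ = Order.succ (Cardinal.mk B) := le_antisymm h h1
      have hBinf : Cardinal.aleph0 ≤ Cardinal.mk B := by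
        by_contra hlt
        push_neg at hlt
        have : Order.succ (Cardinal.mk B) < Cardinal.aleph0 :=
          Cardinal.isSuccLimit_aleph0.succ_lt hlt
        exact absurd (this.trans_le hinf) (not_lt_of_ge h)
      have hreg := (Cardinal.isRegular_succ hBinf).cof_eq
      rw [← h2] at hreg
      rw [hreg] at hsing
      exact lt_irrefl _ hsing
  -- find an index `i` with `(o i).card > mk B`
  have hlt : (Order.succ (Cardinal.mk B)).ord < Ordinal.lsub o := by
    rw [ho]
    exact Cardinal.ord_lt_ord.mpr hsucc
  obtain ⟨i, hi⟩ := Ordinal.lt_lsub_iff.mp hlt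
  have hiB : Cardinal.mk B < (o i).card := by
    have := Ordinal.card_le_card hi
    rw [Cardinal.card_ord] at this
    exact lt_of_lt_of_le (Order.lt_succ _) this
  -- the witness set for `g n i` is not contained in `B`
  have hT : Cardinal.mk B < Cardinal.mk {x : G | (n:ℝ) < |f (g n i * x) - f x|} :=
    lt_of_lt_of_le hiB (hg n i)
  obtain ⟨x, hxT, hxB⟩ : ∃ x, x ∈ {x : G | (n:ℝ) < |f (g n i * x) - f x|} ∧ x ∉ B := by
    by_contra hcc
    push_neg at hcc
    exact absurd (Cardinal.mk_le_mk_of_subset hcc) (not_le_of_gt hT)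
  have hgF : g n i ∈ F := ⟨(ULift.up n, i), rfl⟩
  have hmem : g n i * x ∈ grpBall F x := Set.mem_insert_of_mem _ ⟨g n i, hgF, rfl⟩
  have hxmem : x ∈ grpBall F x := Set.mem_insert _ _
  have hbound := hC x hxB _ hmem _ hxmem
  have : (n:ℝ) < |f (g n i * x) - f x| := hxT
  linarith
end

section
/- Let κ be an infinite cardinal and G a group. If for every subgroup H of G with |H| = κ the κ-ballean of H is emu-bounded, then the κ-ballean of G is emu-bounded. -/
universe u

/-- The `κ`-ballean of a group `G` is emu-bounded: every eventually
macro-uniform `f : G → ℝ` is bounded outside a set of cardinality `< κ`. -/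
def kappaEmuBounded (G : Type u) [Group G] (κ : Cardinal.{u}) : Prop :=
  ∀ f : G → ℝ,
    (∀ F : Set G, Cardinal.mk F < κ →
      ∃ B : Set G, Cardinal.mk B < κ ∧ ∃ C : ℝ,
        ∀ x ∉ B, ∀ a ∈ grpBall F x, ∀ b ∈ grpBall F x, |f a - f b| ≤ C) →
    ∃ B : Set G, Cardinal.mk B < κ ∧ ∃ C : ℝ, ∀ x ∉ B, |f x| ≤ C

/-- Membership in a subgroup ball transfers to a ball in the ambient group. -/
lemma grpBall_coe_mem {G : Type u} [Group G] {H : Subgroup G} {F : Set ↥H} {x a : ↥H}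
    (ha : a ∈ grpBall F x) : (a : G) ∈ grpBall ((Subtype.val : ↥H → G) '' F) (x : G) := by
  rcases ha with rfl | ⟨g, hg, rfl⟩
  · exact Set.mem_insert _ _
  · exact Set.mem_insert_iff.mpr (Or.inr ⟨(g : G), Set.mem_image_of_mem _ hg, rfl⟩)

/-- The subgroup generated by a set `s` has cardinality at most `max #s ℵ₀`. -/
lemma cardinalMk_subgroup_closure_le {G : Type u} [Group G] (s : Set G) (hs : s.Nonempty) :
    Cardinal.mk (Subgroup.closure s) ≤ max (Cardinal.mk s) Cardinal.aleph0 := by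
  haveI hne : Nonempty s := hs.to_subtype
  have hrange : Set.range (Subtype.val : s → G) = s := Subtype.range_coe
  have hcl : (FreeGroup.lift (Subtype.val : s → G)).range = Subgroup.closure s := by
    rw [FreeGroup.range_lift_eq_closure, hrange]
  have h1 : Cardinal.mk (Subgroup.closure s) =
      Cardinal.mk ((FreeGroup.lift (Subtype.val : s → G)).range) := by rw [hcl]
  rw [h1]
  have h2 : Cardinal.mk ((FreeGroup.lift (Subtype.val : s → G)).range : Set G) ≤
      Cardinal.mk (FreeGroup s) := by
    rw [MonoidHom.coe_range]
    exact Cardinal.mk_range_le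
  calc Cardinal.mk ((FreeGroup.lift (Subtype.val : s → G)).range : Set G)
      ≤ Cardinal.mk (FreeGroup s) := h2
    _ = max (Cardinal.mk s) Cardinal.aleph0 := Cardinal.mk_freeGroup _

/-- If the `κ`-ballean of every subgroup `H ≤ G` with `|H| = κ` is emu-bounded,
then the `κ`-ballean of `G` is emu-bounded. -/
theorem kappa_ballean_emuBounded_of_subgroups {G : Type u} [Group G] (κ : Cardinal.{u})
    (hκ : Cardinal.aleph0 ≤ κ)
    (hsub : ∀ H : Subgroup G, Cardinal.mk H = κ → kappaEmuBounded (↥H) κ) :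
    kappaEmuBounded G κ := by
  intro f hf
  by_contra hcon
  push_neg at hcon
  -- each level set `A n` has cardinality at least κ
  have hA : ∀ n : ℕ, κ ≤ Cardinal.mk {x : G | (n : ℝ) ≤ |f x|} := by
    intro n
    by_contra h
    push_neg at h
    obtain ⟨x, hx, hx2⟩ := hcon {x : G | (n : ℝ) ≤ |f x|} h (n : ℝ)
    exact hx (le_of_lt hx2)
  -- choose subsets of size exactly κ
  have hS : ∀ n : ℕ, ∃ S : Set G, S ⊆ {x : G | (n : ℝ) ≤ |f x|} ∧ Cardinal.mk S = κ := by
    intro n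
    exact Cardinal.le_mk_iff_exists_subset.mp (hA n)
  choose S hSsub hScard using hS
  set T : Set G := ⋃ n, S n with hT
  have hTcard_le : Cardinal.mk T ≤ κ := by
    have h0 := Cardinal.mk_iUnion_le_lift (f := S)
    simp only [Cardinal.lift_uzero, Cardinal.mk_nat, Cardinal.lift_aleph0, hScard,
      ciSup_const] at h0
    calc Cardinal.mk T ≤ Cardinal.aleph0 * κ := h0
      _ ≤ κ * κ := mul_le_mul' hκ le_rfl
      _ = κ := Cardinal.mul_eq_self hκ
  have hTne : T.Nonempty := by
    have : (S 0).Nonempty := by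
      rw [← Set.nonempty_coe_sort, ← Cardinal.mk_ne_zero_iff, hScard]
      exact (Cardinal.aleph0_pos.trans_le hκ).ne'
    exact this.mono (Set.subset_iUnion S 0)
  set H : Subgroup G := Subgroup.closure T with hH
  have hTsubH : T ⊆ (H : Set G) := Subgroup.subset_closure
  have hHcard : Cardinal.mk H = κ := by
    apply le_antisymm
    · calc Cardinal.mk H ≤ max (Cardinal.mk T) Cardinal.aleph0 :=
            cardinalMk_subgroup_closure_le T hTne
        _ ≤ κ := max_le hTcard_le hκ
    · calc κ = Cardinal.mk (S 0) := (hScard 0).symm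
        _ ≤ Cardinal.mk (H : Set G) :=
            Cardinal.mk_le_mk_of_subset ((Set.subset_iUnion S 0).trans hTsubH)
  -- restrict f to H
  set g : ↥H → ℝ := fun x => f (x : G) with hg
  have hgemu : ∀ F : Set ↥H, Cardinal.mk F < κ →
      ∃ B : Set ↥H, Cardinal.mk B < κ ∧ ∃ C : ℝ,
        ∀ x ∉ B, ∀ a ∈ grpBall F x, ∀ b ∈ grpBall F x, |g a - g b| ≤ C := by
    intro F hF
    have hF' : Cardinal.mk ((Subtype.val : ↥H → G) '' F) < κ :=
      lt_of_le_of_lt (Cardinal.mk_image_le) hF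
    obtain ⟨B', hB', C', hC'⟩ := hf ((Subtype.val : ↥H → G) '' F) hF'
    refine ⟨(Subtype.val : ↥H → G) ⁻¹' B', ?_, C', ?_⟩
    · exact lt_of_le_of_lt (Cardinal.mk_preimage_of_injective _ _ Subtype.val_injective) hB'
    · intro x hx a ha b hb
      exact hC' (x : G) hx (a : G) (grpBall_coe_mem ha) (b : G) (grpBall_coe_mem hb)
  obtain ⟨B, hB, C, hC⟩ := hsub H hHcard g hgemu
  -- pick n with C < n and a point of S n inside H but outside B
  obtain ⟨n, hn⟩ := exists_nat_gt C
  have hSnH : S n ⊆ Set.range (Subtype.val : ↥H → G) := by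
    rw [Subtype.range_coe]
    exact (Set.subset_iUnion S n).trans hTsubH
  have hpre : κ ≤ Cardinal.mk ((Subtype.val : ↥H → G) ⁻¹' (S n)) := by
    rw [← hScard n]
    exact le_of_eq
      (Cardinal.mk_preimage_of_injective_of_subset_range _ _ Subtype.val_injective hSnH).symm
  have hnotsub : ¬ ((Subtype.val : ↥H → G) ⁻¹' (S n) ⊆ B) := by
    intro h
    exact absurd (hpre.trans (Cardinal.mk_le_mk_of_subset h)) (not_le.mpr hB)
  obtain ⟨x, hx1, hx2⟩ := Set.not_subset.mp hnotsub
  have h1 : |g x| ≤ C := hC x hx2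
  have h2 : (n : ℝ) ≤ |f (x : G)| := hSsub n hx1
  have : (n : ℝ) ≤ C := le_trans h2 h1
  linarith
end

section
/- For a group G, the following are equivalent: (1) every function f : G → ℝ that is macro-uniform with respect to the finitary ballean of G (i.e., for every finite F ⊆ G, sup_{x ∈ G} diam f({x} ∪ Fx) < ∞) is bounded; (2) G is Bergman, i.e., G cannot be written as the union of a strictly increasing sequence (X_n)_{n∈ℕ} of subsets such that X_n = X_n⁻¹ and X_n·X_n ⊆ X_{n+1} for all n. -/
/-!
A macro-uniform `f : G → ℝ` is the same as a function every translate `y ↦ f (g * y)` of which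
stays within bounded distance of `f`. Given such an unbounded `f`, the sets of elements
displacing `f` by at most `r` are symmetric, satisfy `S r * S s ⊆ S (r + s)`, exhaust `G` and are
all proper; sampling them along a rapidly increasing sequence of radii gives a chain that
witnesses that `G` is not Bergman. Conversely, the level `x ↦ min {n | x ∈ Xₙ}` of such a chain
is quasi-subadditive and symmetric, hence macro-uniform, and it is unbounded because the chain
never stabilises.
-/

open Pointwise

section

open Set

variable {G : Type*} [Group G]

def IsMacroUniform (f : G → ℝ) : Prop :=
  ∀ F : Set G, F.Finite → ∃ C : ℝ, ∀ x : G,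
    ∀ a ∈ grpBall F x, ∀ b ∈ grpBall F x, |f a - f b| ≤ C

structure IsBergmanChain (X : ℕ → Set G) : Prop where
  ssubset_succ : ∀ n, X n ⊂ X (n + 1)
  inv_eq : ∀ n, (X n)⁻¹ = X n
  mul_subset_succ : ∀ n, X n * X n ⊆ X (n + 1)
  iUnion_eq_univ : ⋃ n, X n = univ

theorem isMacroUniform_iff {f : G → ℝ} :
    IsMacroUniform f ↔ ∀ g : G, ∃ C : ℝ, ∀ y : G, |f (g * y) - f y| ≤ C := by
  constructor
  · intro hf g
    obtain ⟨C, hC⟩ := hf {g} (finite_singleton g)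
    exact ⟨C, fun y => hC y _ (mem_insert_of_mem _ ⟨g, rfl, rfl⟩) _ (mem_insert y _)⟩
  · intro h F hF
    choose C hC using h
    obtain ⟨M, hM⟩ := (hF.image C).bddAbove
    have hcenter : ∀ x, ∀ a ∈ grpBall F x, |f a - f x| ≤ max M 0 := by
      rintro x a (rfl | ⟨g, hg, rfl⟩)
      · simp
      · exact (hC g x).trans ((hM (mem_image_of_mem C hg)).trans (le_max_left _ _))
    refine ⟨max M 0 + max M 0, fun x a ha b hb => ?_⟩
    calc |f a - f b| ≤ |f a - f x| + |f x - f b| := abs_sub_le _ _ _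
      _ ≤ max M 0 + max M 0 := by
        rw [abs_sub_comm (f x)]
        exact add_le_add (hcenter x a ha) (hcenter x b hb)

section Level

/-- Equals `0` (`sInf ∅`) when `x` lies in no `X n`. -/
noncomputable def chainLevel {α : Type*} (X : ℕ → Set α) (x : α) : ℕ :=
  sInf {n | x ∈ X n}

theorem chainLevel_le {α : Type*} {X : ℕ → Set α} {x : α} {n : ℕ} (h : x ∈ X n) :
    chainLevel X x ≤ n :=
  Nat.sInf_le h

theorem mem_chainLevel {α : Type*} {X : ℕ → Set α} (hX : ⋃ n, X n = univ) (x : α) :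
    x ∈ X (chainLevel X x) :=
  Nat.sInf_mem (mem_iUnion.1 (hX ▸ mem_univ x))

theorem chainLevel_inv {X : ℕ → Set G} (hinv : ∀ n, (X n)⁻¹ = X n) (g : G) :
    chainLevel X g⁻¹ = chainLevel X g := by
  simp only [chainLevel, ← mem_inv, hinv]

variable {X : ℕ → Set G} (hX : IsBergmanChain X)
include hX

theorem IsBergmanChain.monotone : Monotone X :=
  monotone_nat_of_le_succ fun n => (hX.ssubset_succ n).1

theorem IsBergmanChain.chainLevel_mul_le (g x : G) :
    chainLevel X (g * x) ≤ chainLevel X g + chainLevel X x + 1 := by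
  have hmem : g * x ∈ X (max (chainLevel X g) (chainLevel X x) + 1) :=
    hX.mul_subset_succ _ <| mul_mem_mul
      (hX.monotone (le_max_left _ _) (mem_chainLevel hX.iUnion_eq_univ g))
      (hX.monotone (le_max_right _ _) (mem_chainLevel hX.iUnion_eq_univ x))
  exact (chainLevel_le hmem).trans (by omega)

theorem IsBergmanChain.abs_chainLevel_mul_sub_le (g x : G) :
    |(chainLevel X (g * x) : ℝ) - chainLevel X x| ≤ chainLevel X g + 1 := by
  have hup : chainLevel X (g * x) ≤ chainLevel X g + chainLevel X x + 1 :=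
    hX.chainLevel_mul_le g x
  have hdown : chainLevel X x ≤ chainLevel X g + chainLevel X (g * x) + 1 := by
    simpa [chainLevel_inv hX.inv_eq] using hX.chainLevel_mul_le g⁻¹ (g * x)
  rw [abs_sub_le_iff]
  constructor <;> push_cast [← Nat.cast_le (α := ℝ)] at hup hdown <;> linarith

theorem IsBergmanChain.lt_chainLevel (n : ℕ) : ∃ x, n < chainLevel X x := by
  obtain ⟨x, -, hx⟩ := (ssubset_iff_of_subset (hX.ssubset_succ n).1).1 (hX.ssubset_succ n)
  exact ⟨x, not_le.1 fun h => hx (hX.monotone h (mem_chainLevel hX.iUnion_eq_univ x))⟩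

theorem IsBergmanChain.exists_isMacroUniform_unbounded :
    ∃ f : G → ℝ, IsMacroUniform f ∧ ∀ C : ℝ, ∃ x, C < |f x| := by
  refine ⟨fun x => chainLevel X x,
    isMacroUniform_iff.2 fun g => ⟨_, hX.abs_chainLevel_mul_sub_le g⟩, fun C => ?_⟩
  obtain ⟨n, hn⟩ := exists_nat_gt C
  obtain ⟨x, hx⟩ := hX.lt_chainLevel n
  refine ⟨x, hn.trans ?_⟩
  rw [Nat.abs_cast]
  exact_mod_cast hx

end Level

theorem exists_isBergmanChain_of_filtration (S : ℝ → Set G) (hmono : Monotone S)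
    (hinv : ∀ r, (S r)⁻¹ = S r) (hmul : ∀ r s, S r * S s ⊆ S (r + s))
    (hcover : ∀ g, ∃ r, g ∈ S r) (hproper : ∀ r, S r ≠ univ) :
    ∃ X : ℕ → Set G, IsBergmanChain X := by
  -- `r + r ≤ t` lets the sampled sets absorb products, `r + 1 ≤ t` makes them exhaust `G`.
  have hnext : ∀ r, ∃ t, r + r ≤ t ∧ r + 1 ≤ t ∧ S r ⊂ S t := by
    intro r
    obtain ⟨w, hw⟩ := (ne_univ_iff_exists_notMem _).1 (hproper r)
    obtain ⟨t, ht⟩ := hcover w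
    refine ⟨max t (max (r + r) (r + 1)), by simp, by simp, ?_⟩
    refine ssubset_of_subset_not_subset (hmono ?_) fun h => hw (h (hmono (le_max_left _ _) ht))
    exact le_max_of_le_right (le_max_of_le_right (by linarith))
  choose next hnext_double hnext_succ hnext_ssubset using hnext
  set a : ℕ → ℝ := fun n => next^[n] 0
  have ha_succ (n : ℕ) : a (n + 1) = next (a n) := Function.iterate_succ_apply' next n 0
  have ha_ge (n : ℕ) : (n : ℝ) ≤ a n := by
    induction n with
    | zero => simp [a]
    | succ n ih => push_cast; linarith [ha_succ n, hnext_succ (a n)]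
  refine ⟨fun n => S (a n), ⟨fun n => ?_, fun n => hinv _, fun n => ?_, ?_⟩⟩
  · simpa only [ha_succ] using hnext_ssubset (a n)
  · exact (hmul _ _).trans (hmono (by simpa only [ha_succ] using hnext_double (a n)))
  · refine eq_univ_of_forall fun g => ?_
    obtain ⟨r, hr⟩ := hcover g
    obtain ⟨n, hn⟩ := exists_nat_ge r
    exact mem_iUnion.2 ⟨n, hmono (hn.trans (ha_ge n)) hr⟩

section Displacement

variable (f : G → ℝ)

def displacementLE (r : ℝ) : Set G :=
  {g | ∀ y, |f (g * y) - f y| ≤ r}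

theorem monotone_displacementLE : Monotone (displacementLE f) :=
  fun _ _ hrs _ hg y => (hg y).trans hrs

theorem inv_displacementLE (r : ℝ) : (displacementLE f r)⁻¹ = displacementLE f r := by
  have hinv : ∀ g ∈ displacementLE f r, g⁻¹ ∈ displacementLE f r := fun g hg y => by
    simpa [abs_sub_comm] using hg (g⁻¹ * y)
  exact Subset.antisymm (fun g hg => inv_inv g ▸ hinv _ hg) hinv

theorem displacementLE_mul_subset (r s : ℝ) :
    displacementLE f r * displacementLE f s ⊆ displacementLE f (r + s) := by
  rintro _ ⟨g, hg, h, hh, rfl⟩ y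
  calc |f (g * h * y) - f y| ≤ |f (g * (h * y)) - f (h * y)| + |f (h * y) - f y| := by
        rw [mul_assoc]; exact abs_sub_le _ _ _
    _ ≤ r + s := add_le_add (hg _) (hh y)

theorem abs_le_of_mem_displacementLE {r : ℝ} {g : G} (hg : g ∈ displacementLE f r) :
    |f g| ≤ r + |f 1| := by
  have := hg 1
  rw [mul_one] at this
  linarith [abs_sub_abs_le_abs_sub (f g) (f 1)]

theorem exists_isBergmanChain_of_isMacroUniform {f : G → ℝ} (hf : IsMacroUniform f)
    (hunb : ∀ C : ℝ, ∃ x, C < |f x|) : ∃ X : ℕ → Set G, IsBergmanChain X := by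
  refine exists_isBergmanChain_of_filtration (displacementLE f) (monotone_displacementLE f)
    (inv_displacementLE f) (displacementLE_mul_subset f) (isMacroUniform_iff.1 hf) fun r h => ?_
  obtain ⟨x, hx⟩ := hunb (r + |f 1|)
  exact hx.not_ge (abs_le_of_mem_displacementLE f (h ▸ mem_univ x))

end Displacement

end

/-- The finitary ballean of a group `G` is mu-bounded (every macro-uniform
`f : G → ℝ` is bounded) iff `G` is a Bergman group (it is not the union of a
strictly increasing chain `(X n)` with `Xₙ⁻¹ = Xₙ` and `Xₙ·Xₙ ⊆ Xₙ₊₁`). -/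
theorem finitary_muBounded_iff_bergman (G : Type*) [Group G] :
    (∀ f : G → ℝ,
      (∀ F : Set G, F.Finite → ∃ C : ℝ, ∀ x : G,
        ∀ a ∈ grpBall F x, ∀ b ∈ grpBall F x, |f a - f b| ≤ C) →
      ∃ C : ℝ, ∀ x : G, |f x| ≤ C) ↔
    ¬∃ Xs : ℕ → Set G,
      (∀ n : ℕ, Xs n ⊂ Xs (n + 1)) ∧
      (∀ n : ℕ, (Xs n)⁻¹ = Xs n) ∧
      (∀ n : ℕ, Xs n * Xs n ⊆ Xs (n + 1)) ∧
      (⋃ n : ℕ, Xs n) = Set.univ := by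
  constructor
  · rintro hbounded ⟨X, hssubset, hinv, hmul, hunion⟩
    obtain ⟨f, hf, hunb⟩ :=
      (IsBergmanChain.mk hssubset hinv hmul hunion).exists_isMacroUniform_unbounded
    obtain ⟨C, hC⟩ := hbounded f hf
    obtain ⟨x, hx⟩ := hunb C
    exact (hC x).not_gt hx
  · intro hbergman f hf
    by_contra! hunb
    obtain ⟨X, hX⟩ := exists_isBergmanChain_of_isMacroUniform hf hunb
    exact hbergman ⟨X, hX.ssubset_succ, hX.inv_eq, hX.mul_subset_succ, hX.iUnion_eq_univ⟩
end

section
/- Let G be a group such that the cardinal |G| has uncountable cofinality and G is almost Shelah, i.e., for every subset A ⊆ G with |A| = |G| there exists n ∈ ℕ with Aⁿ = G (where Aⁿ is the set of products of n elements of A). Then G is Bergman: G cannot be written as the union of a strictly increasing sequence (X_n)_{n∈ℕ} of subsets such that X_n = X_n⁻¹ and X_n·X_n ⊆ X_{n+1} for all n. -/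
open Pointwise

universe u

/-- If `|G|` has uncountable cofinality and `G` is almost Shelah (every subset of
full cardinality satisfies `Aⁿ = G` for some `n ≥ 1`), then `G` is Bergman: `G` is
not the union of a strictly increasing chain `(X n)` of symmetric subsets with
`Xₙ·Xₙ ⊆ Xₙ₊₁`. -/
theorem bergman_of_almost_shelah {G : Type u} [Group G]
    (hcof : Cardinal.aleph0 < (Cardinal.mk G).ord.cof)
    (hshelah : ∀ A : Set G, Cardinal.mk A = Cardinal.mk G →
      ∃ n : ℕ, 0 < n ∧ A ^ n = (Set.univ : Set G)) :
    ¬∃ Xs : ℕ → Set G,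
      (∀ n : ℕ, Xs n ⊂ Xs (n + 1)) ∧
      (∀ n : ℕ, (Xs n)⁻¹ = Xs n) ∧
      (∀ n : ℕ, Xs n * Xs n ⊆ Xs (n + 1)) ∧
      (⋃ n : ℕ, Xs n) = Set.univ := by
  rintro ⟨Xs, hss, hinv, hmul, huniv⟩
  -- monotonicity of the chain
  have mono : ∀ m k : ℕ, Xs m ⊆ Xs (m + k) := by
    intro m k
    induction k with
    | zero => exact subset_rfl
    | succ k ih => exact ih.trans (hss (m + k)).1
  -- powers are absorbed: Xs m ^ (k+1) ⊆ Xs (m+k)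
  have pow_sub : ∀ m k : ℕ, Xs m ^ (k + 1) ⊆ Xs (m + k) := by
    intro m k
    induction k with
    | zero => simpa using subset_rfl
    | succ k ih =>
      calc Xs m ^ (k + 1 + 1) = Xs m ^ (k + 1) * Xs m := by rw [pow_succ]
        _ ⊆ Xs (m + k) * Xs (m + k) := Set.mul_subset_mul ih (mono m k)
        _ ⊆ Xs (m + k + 1) := hmul (m + k)
  -- no level has full cardinality
  have hsmall : ∀ m : ℕ, Cardinal.mk (Xs m) < Cardinal.mk G := by
    intro m
    rcases lt_or_eq_of_le (Cardinal.mk_le_mk_of_subset (Set.subset_univ (Xs m)) |>.trans_eq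
      Cardinal.mk_univ) with h | h
    · exact h
    · exfalso
      obtain ⟨n, hn, hAn⟩ := hshelah (Xs m) h
      obtain ⟨k, rfl⟩ := Nat.exists_eq_add_of_lt hn
      have h1 : (Set.univ : Set G) ⊆ Xs (m + k) := by
        rw [← hAn]; simpa using pow_sub m k
      have h2 := (hss (m + k)).2
      exact h2 ((Set.subset_univ _).trans h1)
  -- but then the union has cardinality < |G|
  have hℵ₀ : Cardinal.aleph0 ≤ Cardinal.mk G := le_of_lt
    (lt_of_lt_of_le hcof (Ordinal.cof_ord_le _))
  have hU : Cardinal.mk G ≤ Cardinal.mk (⋃ n : ℕ, Xs n) := by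
    rw [huniv, Cardinal.mk_univ]
  have hcard : Cardinal.mk (⋃ n : ℕ, Xs n) < Cardinal.mk G := by
    have heq : (⋃ n : ℕ, Xs n) = ⋃ i : ULift.{u} ℕ, Xs i.down := by
      ext x
      constructor
      · rintro ⟨s, ⟨n, rfl⟩, h⟩; exact Set.mem_iUnion.2 ⟨⟨n⟩, h⟩
      · rintro ⟨s, ⟨i, rfl⟩, h⟩; exact Set.mem_iUnion.2 ⟨i.down, h⟩
    rw [heq]
    refine lt_of_le_of_lt (Cardinal.mk_iUnion_le _) ?_
    have hι : Cardinal.mk (ULift.{u} ℕ) = Cardinal.aleph0 := Cardinal.mk_uLift ℕ ▸ by simp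
    rw [hι]
    apply Cardinal.mul_lt_of_lt hℵ₀ (hcof.trans_le (Ordinal.cof_ord_le _))
    refine Ordinal.iSup_lt_lift ?_ fun i => hsmall i.down
    rw [hι]
    simpa using hcof
  exact absurd (hU.trans_lt hcard) (lt_irrefl _)
end
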